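/- arXiv:1511.01509 — 5 statements merged into one kernel-verified Lean document; each statement's English description precedes it below -/
import Mathlib

section
/- Let φ : ℝⁿ → ℝⁿ be continuous with φ(0) = 0, and suppose there exists a twice continuously differentiable V : ℝⁿ → ℝ and positive constants a₁, a₂, a₃, a₄ such that for all x ∈ ℝⁿ: a₁I ≤ ∇²V(x) ≤ a₂I, ∇V(x)·φ(x) ≤ −a₃‖x‖², and ‖φ(x)‖ ≤ a₄‖x‖, and V(0) = 0 with V(x) > 0 for x ≠ 0. Then the origin is globally exponentially stable for the continuous-time system ẋ = φ(x): there exist M, λ > 0 such that every solution t ↦ x(t) of ẋ(t) = φ(x(t)) satisfies ‖x(t)‖ ≤ M‖x(0)‖e^(−λt) for all t ≥ 0. -/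
open RealInnerProductSpace

/-! A Hessian pinched between `a₁ I` and `a₂ I`, together with `∇V 0 = 0`, makes `V` comparable
to `‖x‖²` from both sides. Along a trajectory the decrease condition then gives
`d/dt V(x t) ≤ -a₃ ‖x t‖² ≤ -(2 a₃ / a₂) V(x t)`, so `V(x t)` decays like `exp (-(2 a₃ / a₂) t)`,
and the two quadratic bounds turn this back into exponential decay of `‖x t‖`. -/

lemma sub_le_sub_of_hasDerivAt_le {f g f' g' : ℝ → ℝ}
    (hf : ∀ t, 0 ≤ t → HasDerivAt f (f' t) t) (hg : ∀ t, 0 ≤ t → HasDerivAt g (g' t) t)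
    (hle : ∀ t, 0 < t → g' t ≤ f' t) {t : ℝ} (ht : 0 ≤ t) :
    g t - g 0 ≤ f t - f 0 := by
  have hderiv : ∀ s, 0 ≤ s → HasDerivAt (fun s => f s - g s) (f' s - g' s) s :=
    fun s hs => (hf s hs).sub (hg s hs)
  have hmono : MonotoneOn (fun s => f s - g s) (Set.Ici 0) := by
    refine monotoneOn_of_deriv_nonneg (convex_Ici 0)
      (fun s hs => (hderiv s hs).continuousAt.continuousWithinAt)
      (fun s hs => ?_) (fun s hs => ?_) <;> rw [interior_Ici] at hs
    · exact (hderiv s hs.le).differentiableAt.differentiableWithinAt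
    · rw [(hderiv s hs.le).deriv]
      exact sub_nonneg.mpr (hle s hs)
  have := hmono Set.self_mem_Ici (Set.mem_Ici.mpr ht) ht
  simp only at this
  linarith

lemma add_half_le_of_le_deriv_deriv {g g' g'' : ℝ → ℝ} {c : ℝ}
    (hg : ∀ t, HasDerivAt g (g' t) t) (hg' : ∀ t, HasDerivAt g' (g'' t) t)
    (h0 : g' 0 = 0) (hc : ∀ t, c ≤ g'' t) :
    g 0 + c / 2 ≤ g 1 := by
  have hslope : ∀ t, 0 ≤ t → c * t ≤ g' t := fun t ht => by
    have := sub_le_sub_of_hasDerivAt_le (g := fun s => s * c) (fun s _ => hg' s)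
      (fun s _ => hasDerivAt_mul_const c) (fun s _ => hc s) ht
    simp only [h0, zero_mul, sub_zero] at this
    linarith
  have := sub_le_sub_of_hasDerivAt_le (g := fun s => c / 2 * s ^ 2) (fun s _ => hg s)
    (fun s _ => ((hasDerivAt_pow 2 s).const_mul (c / 2)).congr_deriv (by ring))
    (fun s hs => hslope s hs.le) zero_le_one
  norm_num at this
  linarith

lemma le_mul_exp_of_hasDerivAt_le_neg_mul {v v' : ℝ → ℝ} {c : ℝ}
    (hv : ∀ t, 0 ≤ t → HasDerivAt v (v' t) t) (hdecay : ∀ t, 0 < t → v' t ≤ -c * v t)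
    {t : ℝ} (ht : 0 ≤ t) :
    v t ≤ v 0 * Real.exp (-c * t) := by
  have hW : ∀ s, 0 ≤ s → HasDerivAt (fun s => v s * Real.exp (c * s))
      ((v' s + c * v s) * Real.exp (c * s)) s := fun s hs =>
    ((hv s hs).mul ((hasDerivAt_id s).const_mul c).exp).congr_deriv (by simp; ring)
  have := sub_le_sub_of_hasDerivAt_le (fun s _ => hasDerivAt_const s 0) hW
    (fun s hs => mul_nonpos_of_nonpos_of_nonneg (by linarith [hdecay s hs]) (Real.exp_pos _).le)
    ht
  simp only [mul_zero, Real.exp_zero, mul_one, sub_self, sub_nonpos] at this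
  rw [neg_mul, Real.exp_neg, ← div_eq_mul_inv, le_div_iff₀ (Real.exp_pos _)]
  exact this

lemma le_sqrt_div_mul_mul_exp_of_mul_sq_le {a₁ a₂ r s c t : ℝ} (ha₁ : 0 < a₁) (ha₂ : 0 ≤ a₂)
    (hr : 0 ≤ r) (hs : 0 ≤ s) (h : a₁ * r ^ 2 ≤ a₂ * s ^ 2 * Real.exp (-(2 * c) * t)) :
    r ≤ √(a₂ / a₁) * s * Real.exp (-c * t) := by
  have hexp : Real.exp (-c * t) ^ 2 = Real.exp (-(2 * c) * t) := by
    rw [← Real.exp_nat_mul]; ring_nf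
  refine (pow_le_pow_iff_left₀ hr (by positivity) two_ne_zero).mp ?_
  rw [mul_pow, mul_pow, Real.sq_sqrt (by positivity), hexp, div_mul_eq_mul_div, div_mul_eq_mul_div,
    le_div_iff₀ ha₁]
  linarith

section QuadraticBounds

variable {E : Type*} [NormedAddCommGroup E] [NormedSpace ℝ E] {V : E → ℝ}

lemma hasDerivAt_smul_const (y : E) (t : ℝ) : HasDerivAt (fun s : ℝ => s • y) y t := by
  simpa using (hasDerivAt_id t).smul_const y

lemma ContDiff.hasDerivAt_comp_smul (hV : ContDiff ℝ 2 V) (y : E) (t : ℝ) :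
    HasDerivAt (fun s : ℝ => V (s • y)) (fderiv ℝ V (t • y) y) t :=
  ((hV.differentiable (by norm_num)) (t • y)).hasFDerivAt.comp_hasDerivAt t
    (hasDerivAt_smul_const y t)

lemma ContDiff.hasDerivAt_fderiv_comp_smul (hV : ContDiff ℝ 2 V) (y : E) (t : ℝ) :
    HasDerivAt (fun s : ℝ => fderiv ℝ V (s • y) y) (iteratedFDeriv ℝ 2 V (t • y) ![y, y]) t := by
  have hD : Differentiable ℝ (fderiv ℝ V) :=
    (hV.fderiv_right (m := 1) (by norm_num)).differentiable (by norm_num)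
  have hDline : HasDerivAt (fun s : ℝ => fderiv ℝ V (s • y)) (fderiv ℝ (fderiv ℝ V) (t • y) y) t :=
    (hD (t • y)).hasFDerivAt.comp_hasDerivAt t (hasDerivAt_smul_const y t)
  rw [iteratedFDeriv_two_apply]
  simpa using hDline.clm_apply (hasDerivAt_const t y)

lemma ContDiff.quadratic_bounds_of_iteratedFDeriv_two_bounds (hV : ContDiff ℝ 2 V)
    (hV0 : V 0 = 0) (hDV0 : fderiv ℝ V 0 = 0) {a₁ a₂ : ℝ}
    (hHess : ∀ x v : E, a₁ * ‖v‖ ^ 2 ≤ iteratedFDeriv ℝ 2 V x ![v, v] ∧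
      iteratedFDeriv ℝ 2 V x ![v, v] ≤ a₂ * ‖v‖ ^ 2) (y : E) :
    a₁ / 2 * ‖y‖ ^ 2 ≤ V y ∧ V y ≤ a₂ / 2 * ‖y‖ ^ 2 := by
  have hg := hV.hasDerivAt_comp_smul y
  have hg' := hV.hasDerivAt_fderiv_comp_smul y
  have h0 : fderiv ℝ V ((0 : ℝ) • y) y = 0 := by rw [zero_smul, hDV0, zero_apply]
  constructor
  · have := add_half_le_of_le_deriv_deriv hg hg' h0 fun t => (hHess (t • y) y).1
    simp only [zero_smul, one_smul, hV0] at this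
    linarith
  · have := add_half_le_of_le_deriv_deriv (fun t => (hg t).neg) (fun t => (hg' t).neg)
      (by rw [h0, neg_zero]) fun t => neg_le_neg (hHess (t • y) y).2
    simp only [Pi.neg_apply, zero_smul, one_smul, hV0] at this
    linarith

end QuadraticBounds

theorem stmt_0_general {n : ℕ}
    (φ : EuclideanSpace ℝ (Fin n) → EuclideanSpace ℝ (Fin n))
    (V : EuclideanSpace ℝ (Fin n) → ℝ) (hV : ContDiff ℝ 2 V)
    (a₁ a₂ a₃ : ℝ) (ha₁ : 0 < a₁) (ha₂ : 0 < a₂) (ha₃ : 0 < a₃)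
    (hHess : ∀ x v : EuclideanSpace ℝ (Fin n),
      a₁ * ‖v‖ ^ 2 ≤ iteratedFDeriv ℝ 2 V x ![v, v] ∧
      iteratedFDeriv ℝ 2 V x ![v, v] ≤ a₂ * ‖v‖ ^ 2)
    (hdecr : ∀ x, ⟪gradient V x, φ x⟫ ≤ -a₃ * ‖x‖ ^ 2)
    (hV0 : V 0 = 0) (hVpos : ∀ x, x ≠ 0 → 0 < V x) :
    ∃ M lam : ℝ, 0 < M ∧ 0 < lam ∧
      ∀ x : ℝ → EuclideanSpace ℝ (Fin n),
        (∀ t : ℝ, 0 ≤ t → HasDerivAt x (φ (x t)) t) →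
        ∀ t : ℝ, 0 ≤ t → ‖x t‖ ≤ M * ‖x 0‖ * Real.exp (-lam * t) := by
  have hDV0 : fderiv ℝ V 0 = 0 := IsLocalMin.fderiv_eq_zero <| .of_forall fun y => by
    rcases eq_or_ne y 0 with rfl | hy
    · exact le_rfl
    · exact hV0 ▸ (hVpos y hy).le
  have hquad := hV.quadratic_bounds_of_iteratedFDeriv_two_bounds hV0 hDV0 hHess
  refine ⟨√(a₂ / a₁), a₃ / a₂, by positivity, by positivity, fun x hx t ht => ?_⟩
  have hVx : ∀ s, 0 ≤ s → HasDerivAt (fun s => V (x s)) ⟪gradient V (x s), φ (x s)⟫ s :=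
    fun s hs => ((hV.differentiable (by norm_num)) (x s)).hasGradientAt.hasFDerivAt.comp_hasDerivAt
      s (hx s hs)
  have hdecay : V (x t) ≤ V (x 0) * Real.exp (-(2 * (a₃ / a₂)) * t) :=
    le_mul_exp_of_hasDerivAt_le_neg_mul hVx (fun s _ => calc
      ⟪gradient V (x s), φ (x s)⟫ ≤ -a₃ * ‖x s‖ ^ 2 := hdecr (x s)
      _ = -(2 * (a₃ / a₂)) * (a₂ / 2 * ‖x s‖ ^ 2) := by field_simp
      _ ≤ -(2 * (a₃ / a₂)) * V (x s) :=
        mul_le_mul_of_nonpos_left (hquad (x s)).2 (by simp only [neg_nonpos]; positivity)) ht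
  refine le_sqrt_div_mul_mul_exp_of_mul_sq_le ha₁ ha₂.le (norm_nonneg _) (norm_nonneg _) ?_
  have hchain := (hquad (x t)).1.trans (hdecay.trans
    (mul_le_mul_of_nonneg_right (hquad (x 0)).2 (Real.exp_pos _).le))
  linarith

/-- Global exponential stability of the continuous-time system
`ẋ = φ(x)` under the Lyapunov-type hypotheses of Theorem 1(a). -/
theorem stmt_0 {n : ℕ}
    (φ : EuclideanSpace ℝ (Fin n) → EuclideanSpace ℝ (Fin n))
    (hφcont : Continuous φ) (hφ0 : φ 0 = 0)
    (V : EuclideanSpace ℝ (Fin n) → ℝ) (hV : ContDiff ℝ 2 V)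
    (a₁ a₂ a₃ a₄ : ℝ) (ha₁ : 0 < a₁) (ha₂ : 0 < a₂) (ha₃ : 0 < a₃) (ha₄ : 0 < a₄)
    (hHess : ∀ x v : EuclideanSpace ℝ (Fin n),
      a₁ * ‖v‖ ^ 2 ≤ iteratedFDeriv ℝ 2 V x ![v, v] ∧
      iteratedFDeriv ℝ 2 V x ![v, v] ≤ a₂ * ‖v‖ ^ 2)
    (hdecr : ∀ x, ⟪gradient V x, φ x⟫ ≤ -a₃ * ‖x‖ ^ 2)
    (hlin : ∀ x, ‖φ x‖ ≤ a₄ * ‖x‖)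
    (hV0 : V 0 = 0) (hVpos : ∀ x, x ≠ 0 → 0 < V x) :
    ∃ M lam : ℝ, 0 < M ∧ 0 < lam ∧
      ∀ x : ℝ → EuclideanSpace ℝ (Fin n),
        (∀ t : ℝ, 0 ≤ t → HasDerivAt x (φ (x t)) t) →
        ∀ t : ℝ, 0 ≤ t → ‖x t‖ ≤ M * ‖x 0‖ * Real.exp (-lam * t) :=
  stmt_0_general φ V hV a₁ a₂ a₃ ha₁ ha₂ ha₃ hHess hdecr hV0 hVpos
end

section
/- Let φ : ℝⁿ → ℝⁿ be continuous with φ(0) = 0, and suppose there exists a twice continuously differentiable V : ℝⁿ → ℝ and positive constants a₁, a₂, a₃, a₄ such that for all x ∈ ℝⁿ: a₁I ≤ ∇²V(x) ≤ a₂I, ∇V(x)·φ(x) ≤ −a₃‖x‖², ‖φ(x)‖ ≤ a₄‖x‖, and V(0) = 0 with V(x) > 0 for x ≠ 0. Then for every ε with 0 < ε < 2a₃/(a₂a₄²), the origin is globally exponentially stable for the forward-Euler discretization x(k+1) = x(k) + εφ(x(k)): there exist M > 0 and μ ∈ (0,1) such that every trajectory satisfies ‖x(k)‖ ≤ M‖x(0)‖μᵏ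 for all k ≥ 0 and all initial conditions x(0) ∈ ℝⁿ. -/
open RealInnerProductSpace

/-! The Hessian bounds give, by Taylor's formula along segments,
`V x + ⟪∇V x, u⟫ + a₁/2 ‖u‖² ≤ V (x + u) ≤ V x + ⟪∇V x, u⟫ + a₂/2 ‖u‖²`; at the minimum `0` of `V`
this sandwiches `V` between `a₁/2 ‖x‖²` and `a₂/2 ‖x‖²`. For an Euler step `u = ε φ x`, the upper
bound with the decrease and growth conditions gives
`V (x + ε φ x) ≤ V x - ε (a₃ - ε a₂ a₄² / 2) ‖x‖²`, and the coefficient is positive exactly when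
`ε < 2 a₃ / (a₂ a₄²)`. So `V` contracts by a fixed factor `ρ < 1` along trajectories, and the
sandwich turns this into `‖x k‖ ≤ √(a₂/a₁) ‖x 0‖ (√ρ)^k`. -/

theorem image_le_tangent_add_sq_of_deriv2_le {g g' g'' : ℝ → ℝ} {K : ℝ}
    (hg : ∀ t, HasDerivAt g (g' t) t) (hg' : ∀ t, HasDerivAt g' (g'' t) t)
    (hK : ∀ t, g'' t ≤ K) {s t : ℝ} (hst : s ≤ t) :
    g t ≤ g s + g' s * (t - s) + K / 2 * (t - s) ^ 2 := by
  rcases hst.eq_or_lt with rfl | hst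
  · simp
  -- `K r² / 2 - g r` is convex, hence lies above its tangent line at `s`.
  have hd : ∀ r, HasDerivAt (fun r => K / 2 * r ^ 2 - g r) (K * r - g' r) r := fun r => by
    refine (((hasDerivAt_pow 2 r).const_mul (K / 2)).sub (hg r)).congr_deriv ?_
    push_cast
    ring
  have hd' : ∀ r, HasDerivAt (fun r => K * r - g' r) (K - g'' r) r := fun r => by
    refine (((hasDerivAt_id r).const_mul K).sub (hg' r)).congr_deriv ?_
    rw [mul_one]
  have hconv : ConvexOn ℝ Set.univ (fun r => K / 2 * r ^ 2 - g r) :=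
    convexOn_of_hasDerivWithinAt2_nonneg convex_univ
      (fun r _ => (hd r).continuousAt.continuousWithinAt)
      (fun r _ => (hd r).hasDerivWithinAt) (fun r _ => (hd' r).hasDerivWithinAt)
      (fun r _ => sub_nonneg.2 (hK r))
  have hslope := hconv.le_slope_of_hasDerivAt trivial trivial hst (hd s)
  rw [slope_def_field, le_div_iff₀ (sub_pos.2 hst)] at hslope
  nlinarith

section

variable {E : Type*} [NormedAddCommGroup E] [InnerProductSpace ℝ E]

theorem ContDiff.hasDerivAt_comp_line {V : E → ℝ} (hV : ContDiff ℝ 2 V) (x u : E) (t : ℝ) :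
    HasDerivAt (fun t : ℝ => V (x + t • u)) (fderiv ℝ V (x + t • u) u) t :=
  ((hV.differentiable two_ne_zero) _).hasFDerivAt.comp_hasDerivAt t
    (((hasDerivAt_id t).smul_const u).const_add x |>.congr_deriv (one_smul ℝ u))

theorem ContDiff.hasDerivAt_fderiv_comp_line {V : E → ℝ} (hV : ContDiff ℝ 2 V) (x u : E)
    (t : ℝ) :
    HasDerivAt (fun t : ℝ => fderiv ℝ V (x + t • u) u)
      (iteratedFDeriv ℝ 2 V (x + t • u) ![u, u]) t := by
  have hline : HasDerivAt (fun t : ℝ => x + t • u) u t :=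
    ((hasDerivAt_id t).smul_const u).const_add x |>.congr_deriv (one_smul ℝ u)
  have hV' : Differentiable ℝ (fderiv ℝ V) :=
    (hV.fderiv_right (m := 1) le_rfl).differentiable one_ne_zero
  rw [iteratedFDeriv_two_apply]
  exact (ContinuousLinearMap.apply ℝ ℝ u).hasFDerivAt.comp_hasDerivAt t
    ((hV' _).hasFDerivAt.comp_hasDerivAt t hline)

variable [CompleteSpace E]

theorem ContDiff.le_add_inner_gradient_add_sq {V : E → ℝ} (hV : ContDiff ℝ 2 V) {a : ℝ}
    {x u : E} (hub : ∀ y, iteratedFDeriv ℝ 2 V y ![u, u] ≤ a * ‖u‖ ^ 2) :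
    V (x + u) ≤ V x + ⟪gradient V x, u⟫ + a / 2 * ‖u‖ ^ 2 := by
  have := image_le_tangent_add_sq_of_deriv2_le (hV.hasDerivAt_comp_line x u)
    (hV.hasDerivAt_fderiv_comp_line x u) (fun t => hub _) zero_le_one
  have hgrad : ⟪gradient V x, u⟫ = fderiv ℝ V x u := InnerProductSpace.toDual_symm_apply
  simp only [sub_zero, one_pow, mul_one, zero_smul, add_zero, one_smul] at this
  rw [hgrad]
  linarith

theorem ContDiff.add_inner_gradient_add_sq_le {V : E → ℝ} (hV : ContDiff ℝ 2 V) {a : ℝ}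
    {x u : E} (hlb : ∀ y, a * ‖u‖ ^ 2 ≤ iteratedFDeriv ℝ 2 V y ![u, u]) :
    V x + ⟪gradient V x, u⟫ + a / 2 * ‖u‖ ^ 2 ≤ V (x + u) := by
  have hub : ∀ y, iteratedFDeriv ℝ 2 (-V) y ![u, u] ≤ -a * ‖u‖ ^ 2 := fun y => by
    rw [iteratedFDeriv_neg_apply, neg_apply]
    linarith [hlb y]
  have := hV.neg.le_add_inner_gradient_add_sq (x := x) hub
  rw [gradient, fderiv_fun_neg, map_neg, ← gradient, inner_neg_left] at this
  linarith

theorem IsLocalMin.gradient_eq_zero {V : E → ℝ} {x : E} (h : IsLocalMin V x) :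
    gradient V x = 0 := by
  rw [gradient, h.fderiv_eq_zero, map_zero]

theorem lyapunov_forwardEuler_step_le {V : E → ℝ} (hV : ContDiff ℝ 2 V) {φ : E → E}
    {a₂ a₃ a₄ ε : ℝ} (ha₂ : 0 ≤ a₂) (hε : 0 ≤ ε)
    (hHess : ∀ y v, iteratedFDeriv ℝ 2 V y ![v, v] ≤ a₂ * ‖v‖ ^ 2)
    (hdecr : ∀ x, ⟪gradient V x, φ x⟫ ≤ -a₃ * ‖x‖ ^ 2) (hlin : ∀ x, ‖φ x‖ ≤ a₄ * ‖x‖)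
    (x : E) :
    V (x + ε • φ x) ≤ V x - ε * (a₃ - ε * a₂ * a₄ ^ 2 / 2) * ‖x‖ ^ 2 := by
  have hquad := hV.le_add_inner_gradient_add_sq (x := x) (fun y => hHess y (ε • φ x))
  have hnorm : ‖ε • φ x‖ ^ 2 ≤ ε ^ 2 * (a₄ * ‖x‖) ^ 2 := by
    rw [norm_smul, Real.norm_of_nonneg hε, mul_pow]
    gcongr
    exact hlin x
  rw [real_inner_smul_right] at hquad
  nlinarith [mul_le_mul_of_nonneg_left (hdecr x) hε, mul_le_mul_of_nonneg_left hnorm ha₂]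

end

theorem norm_le_of_lyapunov_contraction {F : Type*} [SeminormedAddCommGroup F] {V : F → ℝ}
    {α β ρ : ℝ} (hα : 0 < α) (hβ : 0 ≤ β) (hρ : 0 ≤ ρ) (hlb : ∀ x, α * ‖x‖ ^ 2 ≤ V x)
    (hub : ∀ x, V x ≤ β * ‖x‖ ^ 2) {x : ℕ → F} (hx : ∀ k, V (x (k + 1)) ≤ ρ * V (x k))
    (k : ℕ) : ‖x k‖ ≤ √(β / α) * ‖x 0‖ * √ρ ^ k := by
  have hVk : V (x k) ≤ ρ ^ k * V (x 0) := by
    induction k with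
    | zero => simp
    | succ k ih =>
      calc V (x (k + 1)) ≤ ρ * V (x k) := hx k
        _ ≤ ρ * (ρ ^ k * V (x 0)) := mul_le_mul_of_nonneg_left ih hρ
        _ = ρ ^ (k + 1) * V (x 0) := by ring
  have hsq : ‖x k‖ ^ 2 ≤ (√(β / α) * ‖x 0‖ * √ρ ^ k) ^ 2 := by
    have hα_le : α * ‖x k‖ ^ 2 ≤ ρ ^ k * (β * ‖x 0‖ ^ 2) :=
      (hlb (x k)).trans (hVk.trans (mul_le_mul_of_nonneg_left (hub (x 0)) (by positivity)))
    calc ‖x k‖ ^ 2 = α * ‖x k‖ ^ 2 / α := by field_simp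
      _ ≤ ρ ^ k * (β * ‖x 0‖ ^ 2) / α := by gcongr
      _ = (√(β / α) * ‖x 0‖ * √ρ ^ k) ^ 2 := by
        rw [mul_pow, mul_pow, ← pow_mul, mul_comm k, pow_mul, Real.sq_sqrt (by positivity),
          Real.sq_sqrt hρ]
        ring
  exact (pow_le_pow_iff_left₀ (norm_nonneg _) (by positivity) two_ne_zero).1 hsq

theorem stmt_1_general {n : ℕ}
    (φ : EuclideanSpace ℝ (Fin n) → EuclideanSpace ℝ (Fin n))
    (V : EuclideanSpace ℝ (Fin n) → ℝ) (hV : ContDiff ℝ 2 V)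
    (a₁ a₂ a₃ a₄ : ℝ) (ha₁ : 0 < a₁) (ha₂ : 0 < a₂) (ha₄ : 0 < a₄)
    (hHess : ∀ x v : EuclideanSpace ℝ (Fin n),
      a₁ * ‖v‖ ^ 2 ≤ iteratedFDeriv ℝ 2 V x ![v, v] ∧
      iteratedFDeriv ℝ 2 V x ![v, v] ≤ a₂ * ‖v‖ ^ 2)
    (hdecr : ∀ x, ⟪gradient V x, φ x⟫ ≤ -a₃ * ‖x‖ ^ 2)
    (hlin : ∀ x, ‖φ x‖ ≤ a₄ * ‖x‖)
    (hV0 : V 0 = 0) (hVpos : ∀ x, x ≠ 0 → 0 < V x)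
    (ε : ℝ) (hε : 0 < ε) (hε' : ε < 2 * a₃ / (a₂ * a₄ ^ 2)) :
    ∃ M μ : ℝ, 0 < M ∧ 0 < μ ∧ μ < 1 ∧
      ∀ x : ℕ → EuclideanSpace ℝ (Fin n),
        (∀ k : ℕ, x (k + 1) = x k + ε • φ (x k)) →
        ∀ k : ℕ, ‖x k‖ ≤ M * ‖x 0‖ * μ ^ k := by
  have hmin : IsLocalMin V 0 := .of_forall fun y => by
    rcases eq_or_ne y 0 with rfl | hy
    exacts [le_rfl, hV0 ▸ (hVpos y hy).le]
  have hVlb : ∀ x, a₁ / 2 * ‖x‖ ^ 2 ≤ V x := fun x => by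
    simpa [hV0, hmin.gradient_eq_zero] using
      hV.add_inner_gradient_add_sq_le (x := 0) fun y => (hHess y x).1
  have hVub : ∀ x, V x ≤ a₂ / 2 * ‖x‖ ^ 2 := fun x => by
    simpa [hV0, hmin.gradient_eq_zero] using
      hV.le_add_inner_gradient_add_sq (x := 0) fun y => (hHess y x).2
  set c := ε * (a₃ - ε * a₂ * a₄ ^ 2 / 2)
  have hc : 0 < c := mul_pos hε (by rw [lt_div_iff₀ (by positivity)] at hε'; linarith)
  set ρ := max (1 - 2 * c / a₂) (1 / 2)
  have hρ : ρ < 1 := max_lt (by linarith [div_pos (mul_pos two_pos hc) ha₂]) (by norm_num)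
  have hstep : ∀ x, V (x + ε • φ x) ≤ ρ * V x := fun x => by
    have hdec : V (x + ε • φ x) ≤ V x - c * ‖x‖ ^ 2 :=
      lyapunov_forwardEuler_step_le hV ha₂.le hε.le (fun y v => (hHess y v).2) hdecr hlin x
    have hV_le : 2 * c / a₂ * V x ≤ c * ‖x‖ ^ 2 := by
      rw [div_mul_eq_mul_div, div_le_iff₀ ha₂]
      nlinarith [hVub x]
    calc V (x + ε • φ x) ≤ (1 - 2 * c / a₂) * V x := by linarith
      _ ≤ ρ * V x := by
        gcongr
        · exact (by positivity : (0 : ℝ) ≤ a₁ / 2 * ‖x‖ ^ 2).trans (hVlb x)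
        · exact le_max_left _ _
  refine ⟨√(a₂ / 2 / (a₁ / 2)), √ρ, by positivity, by positivity,
    (Real.sqrt_lt' one_pos).2 (by rwa [one_pow]), fun x hx k => ?_⟩
  exact norm_le_of_lyapunov_contraction (by positivity) (by positivity) (by positivity) hVlb hVub
    (fun k => hx k ▸ hstep (x k)) k

/-- Global exponential stability of the forward-Euler discretization
`x(k+1) = x(k) + ε φ(x(k))` for every step size `0 < ε < 2a₃/(a₂a₄²)`. -/
theorem stmt_1 {n : ℕ}
    (φ : EuclideanSpace ℝ (Fin n) → EuclideanSpace ℝ (Fin n))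
    (hφcont : Continuous φ) (hφ0 : φ 0 = 0)
    (V : EuclideanSpace ℝ (Fin n) → ℝ) (hV : ContDiff ℝ 2 V)
    (a₁ a₂ a₃ a₄ : ℝ) (ha₁ : 0 < a₁) (ha₂ : 0 < a₂) (ha₃ : 0 < a₃) (ha₄ : 0 < a₄)
    (hHess : ∀ x v : EuclideanSpace ℝ (Fin n),
      a₁ * ‖v‖ ^ 2 ≤ iteratedFDeriv ℝ 2 V x ![v, v] ∧
      iteratedFDeriv ℝ 2 V x ![v, v] ≤ a₂ * ‖v‖ ^ 2)
    (hdecr : ∀ x, ⟪gradient V x, φ x⟫ ≤ -a₃ * ‖x‖ ^ 2)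
    (hlin : ∀ x, ‖φ x‖ ≤ a₄ * ‖x‖)
    (hV0 : V 0 = 0) (hVpos : ∀ x, x ≠ 0 → 0 < V x)
    (ε : ℝ) (hε : 0 < ε) (hε' : ε < 2 * a₃ / (a₂ * a₄ ^ 2)) :
    ∃ M μ : ℝ, 0 < M ∧ 0 < μ ∧ μ < 1 ∧
      ∀ x : ℕ → EuclideanSpace ℝ (Fin n),
        (∀ k : ℕ, x (k + 1) = x k + ε • φ (x k)) →
        ∀ k : ℕ, ‖x k‖ ≤ M * ‖x 0‖ * μ ^ k :=
  stmt_1_general φ V hV a₁ a₂ a₃ a₄ ha₁ ha₂ ha₄ hHess hdecr hlin hV0 hVpos ε hε hε'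
end

section
/- Under the Newton–Raphson setup, the function V_NR(x) := f̄(x) satisfies, for all x ∈ ℝⁿ: (i) cI ≤ ∇²V_NR(x) ≤ mI; (ii) ‖φ_NR(x)‖ ≤ (m/c)‖x‖; and (iii) ∇V_NR(x)·φ_NR(x) ≤ −(c²/m)‖x‖². -/
/-! Along the segment from `0` to `x`, the Hessian bounds give `c‖x‖² ≤ ⟪∇f̄ x, x⟫`, hence
`c‖x‖ ≤ ‖∇f̄ x‖`; and since Cauchy–Schwarz turns `0 ≤ ∇²f̄ ≤ m` into `‖∇²f̄‖ ≤ m`, the mean value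
inequality gives `‖∇f̄ x‖ ≤ m‖x‖`. For `y = h̄(x)⁻¹ ∇f̄ x`, the bound `cI ≤ h̄(x)` gives
`c‖y‖ ≤ ‖∇f̄ x‖`, and Cauchy–Schwarz for the form of `0 ≤ h̄(x) ≤ mI` gives the co-coercivity
`‖h̄(x) y‖² ≤ m⟪h̄(x) y, y⟫`, i.e. `‖∇f̄ x‖² ≤ m⟪∇f̄ x, y⟫`. Since `φ_NR x = -y`, these four
inequalities combine into (ii) and (iii). -/

open RealInnerProductSpace

theorem mul_norm_le_norm_of_mul_norm_sq_le_inner {E : Type*} [NormedAddCommGroup E]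
    [InnerProductSpace ℝ E] {c : ℝ} {u v : E} (h : c * ‖v‖ ^ 2 ≤ ⟪u, v⟫) : c * ‖v‖ ≤ ‖u‖ := by
  rcases (norm_nonneg v).eq_or_lt with hv | hv
  · simp [← hv]
  refine le_of_mul_le_mul_right ?_ hv
  calc c * ‖v‖ * ‖v‖ = c * ‖v‖ ^ 2 := by ring
    _ ≤ ⟪u, v⟫ := h
    _ ≤ ‖u‖ * ‖v‖ := real_inner_le_norm u v

theorem LinearMap.BilinForm.apply_sq_le_of_apply_self_le {E : Type*} [SeminormedAddCommGroup E]
    [Module ℝ E] {B : LinearMap.BilinForm ℝ E} {m : ℝ} (hB : ∀ v w, B v w = B w v)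
    (hB0 : ∀ v, 0 ≤ B v v) (hBm : ∀ v, B v v ≤ m * ‖v‖ ^ 2) (v w : E) :
    B v w ^ 2 ≤ m * B v v * ‖w‖ ^ 2 :=
  calc B v w ^ 2 = B v w * B w v := by rw [sq, hB w v]
    _ ≤ B v v * B w w := B.apply_mul_apply_le_of_forall_zero_le hB0 v w
    _ ≤ B v v * (m * ‖w‖ ^ 2) := mul_le_mul_of_nonneg_left (hBm w) (hB0 v)
    _ = m * B v v * ‖w‖ ^ 2 := by ring

theorem ContinuousLinearMap.norm_le_of_apply_self_le {E : Type*} [SeminormedAddCommGroup E]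
    [NormedSpace ℝ E] {B : E →L[ℝ] E →L[ℝ] ℝ} {m : ℝ} (hm : 0 ≤ m) (hB : ∀ v w, B v w = B w v)
    (hB0 : ∀ v, 0 ≤ B v v) (hBm : ∀ v, B v v ≤ m * ‖v‖ ^ 2) : ‖B‖ ≤ m := by
  refine B.opNorm_le_bound₂ hm fun v w => abs_le_of_sq_le_sq ?_ (by positivity)
  calc B v w ^ 2 ≤ m * B v v * ‖w‖ ^ 2 :=
        B.toBilinForm.apply_sq_le_of_apply_self_le hB hB0 hBm v w
    _ ≤ m * (m * ‖v‖ ^ 2) * ‖w‖ ^ 2 := by gcongr; exact hBm v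
    _ = (m * ‖v‖ * ‖w‖) ^ 2 := by ring

theorem LinearMap.IsPositive.norm_map_sq_le {E : Type*} [NormedAddCommGroup E]
    [InnerProductSpace ℝ E] {T : E →ₗ[ℝ] E} {m : ℝ} (hT : T.IsPositive)
    (hTm : ∀ v, ⟪T v, v⟫ ≤ m * ‖v‖ ^ 2) (v : E) : ‖T v‖ ^ 2 ≤ m * ⟪T v, v⟫ := by
  set B : LinearMap.BilinForm ℝ E := (innerₗ E).comp T
  have hB : ∀ u w, B u w = B w u := fun u w => by
    simp [B, hT.isSymmetric u w, real_inner_comm]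
  have key := B.apply_sq_le_of_apply_self_le hB hT.inner_nonneg_left hTm v (T v)
  simp only [B, LinearMap.comp_apply, innerₗ_apply_apply, real_inner_self_eq_norm_sq] at key
  rcases (sq_nonneg ‖T v‖).eq_or_lt with h | h
  · have hTv : T v = 0 := by simpa using h.symm
    simp [hTv]
  · exact le_of_mul_le_mul_right (by linarith) h

section SecondDerivative

variable {E : Type*} [NormedAddCommGroup E] [NormedSpace ℝ E] {f : E → ℝ}

theorem mul_norm_sq_le_fderiv_apply_self {c : ℝ} (hf : Differentiable ℝ (fderiv ℝ f))
    (hf0 : fderiv ℝ f 0 = 0) (hc : ∀ x v, c * ‖v‖ ^ 2 ≤ fderiv ℝ (fderiv ℝ f) x v v) (x : E) :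
    c * ‖x‖ ^ 2 ≤ fderiv ℝ f x x := by
  have hderiv (t : ℝ) :
      HasDerivAt (fun s : ℝ => fderiv ℝ f (s • x) x) (fderiv ℝ (fderiv ℝ f) (t • x) x x) t := by
    have hline : HasDerivAt (fun s : ℝ => s • x) x t := by
      simpa using (hasDerivAt_id t).smul_const x
    have hcurve := (hf (t • x)).hasFDerivAt.comp_hasDerivAt t hline
    exact (ContinuousLinearMap.apply ℝ ℝ x).hasFDerivAt.comp_hasDerivAt t hcurve
  have := mul_sub_le_image_sub_of_le_deriv (fun t => (hderiv t).differentiableAt)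
    (fun t => (hderiv t).deriv ▸ hc (t • x) x) zero_le_one
  simpa [hf0] using this

end SecondDerivative

section Gradient

variable {E : Type*} [NormedAddCommGroup E] [InnerProductSpace ℝ E] [CompleteSpace E]
  {f : E → ℝ}

theorem fderiv_eq_zero_of_gradient_eq_zero {x : E} (h : gradient f x = 0) :
    fderiv ℝ f x = 0 := by
  rw [← toDual_gradient, h, map_zero]

theorem mul_norm_le_norm_gradient {c : ℝ} (hf : Differentiable ℝ (fderiv ℝ f))
    (hf0 : gradient f 0 = 0) (hc : ∀ x v, c * ‖v‖ ^ 2 ≤ fderiv ℝ (fderiv ℝ f) x v v) (x : E) :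
    c * ‖x‖ ≤ ‖gradient f x‖ := by
  refine mul_norm_le_norm_of_mul_norm_sq_le_inner ?_
  rw [← InnerProductSpace.toDual_apply_apply, toDual_gradient]
  exact mul_norm_sq_le_fderiv_apply_self hf (fderiv_eq_zero_of_gradient_eq_zero hf0) hc x

theorem norm_gradient_le_mul_norm {m : ℝ} (hf : ContDiff ℝ 2 f) (hf0 : gradient f 0 = 0)
    (hm : 0 ≤ m) (h0 : ∀ x v, 0 ≤ fderiv ℝ (fderiv ℝ f) x v v)
    (hle : ∀ x v, fderiv ℝ (fderiv ℝ f) x v v ≤ m * ‖v‖ ^ 2) (x : E) :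
    ‖gradient f x‖ ≤ m * ‖x‖ := by
  have hf' : Differentiable ℝ (fderiv ℝ f) :=
    (hf.fderiv_right le_rfl).differentiable one_ne_zero
  have hnorm (y : E) : ‖fderiv ℝ (fderiv ℝ f) y‖ ≤ m :=
    ContinuousLinearMap.norm_le_of_apply_self_le hm
      (hf.contDiffAt.isSymmSndFDerivAt (by simp)) (h0 y) (hle y)
  have := convex_univ.norm_image_sub_le_of_norm_fderiv_le (fun y _ => hf' y)
    (fun y _ => hnorm y) (Set.mem_univ 0) (Set.mem_univ x)
  rw [← (InnerProductSpace.toDual ℝ E).norm_map, toDual_gradient]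
  simpa [fderiv_eq_zero_of_gradient_eq_zero hf0] using this

end Gradient

namespace Matrix

theorem posDef_of_posSemidef_sub_smul_one {n : Type*} [DecidableEq n] {A : Matrix n n ℝ}
    {c : ℝ} (hc : 0 < c) (h : (A - c • 1).PosSemidef) : A.PosDef := by
  simpa using (PosDef.one.smul hc).add_posSemidef h

variable {n : Type*} [Fintype n] [DecidableEq n]

theorem toEuclideanLin_apply_inv_apply {𝕜 : Type*} [RCLike 𝕜] {A : Matrix n n 𝕜}
    (hA : IsUnit A.det) (v : EuclideanSpace 𝕜 n) :
    A.toEuclideanLin (A⁻¹.toEuclideanLin v) = v := by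
  rw [← LinearMap.comp_apply, ← toLpLin_mul_same, mul_nonsing_inv A hA, toLpLin_one,
    LinearMap.id_apply]

theorem inner_toEuclideanLin_le_of_posSemidef_sub {A B : Matrix n n ℝ}
    (h : (A - B).PosSemidef) (v : EuclideanSpace ℝ n) :
    ⟪B.toEuclideanLin v, v⟫ ≤ ⟪A.toEuclideanLin v, v⟫ := by
  simpa [inner_sub_left] using (isPositive_toEuclideanLin_iff.mpr h).inner_nonneg_left v

theorem PosDef.mul_norm_toEuclideanLin_inv_apply_le {A : Matrix n n ℝ} (hA : A.PosDef) {c : ℝ}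
    (hcA : (A - c • 1).PosSemidef) (g : EuclideanSpace ℝ n) :
    c * ‖A⁻¹.toEuclideanLin g‖ ≤ ‖g‖ := by
  set y := A⁻¹.toEuclideanLin g
  have hy : A.toEuclideanLin y = g :=
    toEuclideanLin_apply_inv_apply ((isUnit_iff_isUnit_det A).mp hA.isUnit) g
  refine mul_norm_le_norm_of_mul_norm_sq_le_inner ?_
  simpa [hy, real_inner_smul_left, real_inner_self_eq_norm_sq] using
    inner_toEuclideanLin_le_of_posSemidef_sub hcA y

theorem PosDef.norm_sq_le_mul_inner_toEuclideanLin_inv_apply {A : Matrix n n ℝ} (hA : A.PosDef)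
    {m : ℝ} (hAm : (m • 1 - A).PosSemidef) (g : EuclideanSpace ℝ n) :
    ‖g‖ ^ 2 ≤ m * ⟪g, A⁻¹.toEuclideanLin g⟫ := by
  set y := A⁻¹.toEuclideanLin g
  have hy : A.toEuclideanLin y = g :=
    toEuclideanLin_apply_inv_apply ((isUnit_iff_isUnit_det A).mp hA.isUnit) g
  have hAm' (v : EuclideanSpace ℝ n) : ⟪A.toEuclideanLin v, v⟫ ≤ m * ‖v‖ ^ 2 := by
    simpa [real_inner_smul_left, real_inner_self_eq_norm_sq] using
      inner_toEuclideanLin_le_of_posSemidef_sub hAm v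
  simpa [hy] using (isPositive_toEuclideanLin_iff.mpr hA.posSemidef).norm_map_sq_le hAm' y

end Matrix

theorem stmt_5_general {n : ℕ} (c m : ℝ) (hc : 0 < c) (hm : 1 ≤ m)
    (f : EuclideanSpace ℝ (Fin n) → ℝ) (hf : ContDiff ℝ 3 f)
    (hgrad0 : gradient f 0 = 0)
    (hHess : ∀ x v : EuclideanSpace ℝ (Fin n),
      c * ‖v‖ ^ 2 ≤ iteratedFDeriv ℝ 2 f x ![v, v] ∧
      iteratedFDeriv ℝ 2 f x ![v, v] ≤ m * ‖v‖ ^ 2)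
    (h : EuclideanSpace ℝ (Fin n) → Matrix (Fin n) (Fin n) ℝ)
    (hbnd : ∀ x, (h x - c • (1 : Matrix (Fin n) (Fin n) ℝ)).PosSemidef ∧
      (m • (1 : Matrix (Fin n) (Fin n) ℝ) - h x).PosSemidef)
    (φNR : EuclideanSpace ℝ (Fin n) → EuclideanSpace ℝ (Fin n))
    (hφNR : ∀ x, φNR x = -(Matrix.toEuclideanLin (h x)⁻¹ (gradient f x))) :
    (∀ x v : EuclideanSpace ℝ (Fin n),
        c * ‖v‖ ^ 2 ≤ iteratedFDeriv ℝ 2 f x ![v, v] ∧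
        iteratedFDeriv ℝ 2 f x ![v, v] ≤ m * ‖v‖ ^ 2) ∧
    (∀ x, ‖φNR x‖ ≤ m / c * ‖x‖) ∧
    (∀ x, ⟪gradient f x, φNR x⟫ ≤ -(c ^ 2 / m) * ‖x‖ ^ 2) := by
  have hf2 : ContDiff ℝ 2 f := hf.of_le (by norm_num)
  have hHess' (y v : EuclideanSpace ℝ (Fin n)) : c * ‖v‖ ^ 2 ≤ fderiv ℝ (fderiv ℝ f) y v v ∧
      fderiv ℝ (fderiv ℝ f) y v v ≤ m * ‖v‖ ^ 2 := by
    simpa [iteratedFDeriv_two_apply] using hHess y v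
  have hgrad_le (x : EuclideanSpace ℝ (Fin n)) : ‖gradient f x‖ ≤ m * ‖x‖ :=
    norm_gradient_le_mul_norm hf2 hgrad0 (by linarith)
      (fun y v => (by positivity : 0 ≤ c * ‖v‖ ^ 2).trans (hHess' y v).1)
      (fun y v => (hHess' y v).2) x
  have hgrad_ge (x : EuclideanSpace ℝ (Fin n)) : c * ‖x‖ ≤ ‖gradient f x‖ :=
    mul_norm_le_norm_gradient ((hf2.fderiv_right le_rfl).differentiable one_ne_zero) hgrad0
      (fun y v => (hHess' y v).1) x
  have hpos (x : EuclideanSpace ℝ (Fin n)) : (h x).PosDef :=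
    Matrix.posDef_of_posSemidef_sub_smul_one hc (hbnd x).1
  refine ⟨hHess, fun x => ?_, fun x => ?_⟩
  · have hy := (hpos x).mul_norm_toEuclideanLin_inv_apply_le (hbnd x).1 (gradient f x)
    rw [hφNR, norm_neg, div_mul_eq_mul_div, le_div_iff₀ hc]
    linarith [hgrad_le x]
  · have hgy := (hpos x).norm_sq_le_mul_inner_toEuclideanLin_inv_apply (hbnd x).2 (gradient f x)
    have hsq : c ^ 2 * ‖x‖ ^ 2 ≤ ‖gradient f x‖ ^ 2 := by
      simpa [mul_pow] using pow_le_pow_left₀ (by positivity) (hgrad_ge x) 2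
    rw [hφNR, inner_neg_right, neg_mul, neg_le_neg_iff, div_mul_eq_mul_div,
      div_le_iff₀ (by linarith)]
    linarith

/-- Quantitative bounds for `V_NR := f̄` in the Newton–Raphson setup:
(i) `cI ≤ ∇²V_NR ≤ mI`, (ii) `‖φ_NR(x)‖ ≤ (m/c)‖x‖`,
(iii) `∇V_NR(x)·φ_NR(x) ≤ −(c²/m)‖x‖²`. -/
theorem stmt_5 {n : ℕ} (c m : ℝ) (hc : 0 < c) (hc1 : c ≤ 1) (hm : 1 ≤ m)
    (f : EuclideanSpace ℝ (Fin n) → ℝ) (hf : ContDiff ℝ 3 f)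
    (hf0 : f 0 = 0) (hgrad0 : gradient f 0 = 0)
    (hHess : ∀ x v : EuclideanSpace ℝ (Fin n),
      c * ‖v‖ ^ 2 ≤ iteratedFDeriv ℝ 2 f x ![v, v] ∧
      iteratedFDeriv ℝ 2 f x ![v, v] ≤ m * ‖v‖ ^ 2)
    (h : EuclideanSpace ℝ (Fin n) → Matrix (Fin n) (Fin n) ℝ)
    (hsym : ∀ x, (h x).IsHermitian)
    (hbnd : ∀ x, (h x - c • (1 : Matrix (Fin n) (Fin n) ℝ)).PosSemidef ∧
      (m • (1 : Matrix (Fin n) (Fin n) ℝ) - h x).PosSemidef)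
    (φNR : EuclideanSpace ℝ (Fin n) → EuclideanSpace ℝ (Fin n))
    (hφNR : ∀ x, φNR x = -(Matrix.toEuclideanLin (h x)⁻¹ (gradient f x))) :
    (∀ x v : EuclideanSpace ℝ (Fin n),
        c * ‖v‖ ^ 2 ≤ iteratedFDeriv ℝ 2 f x ![v, v] ∧
        iteratedFDeriv ℝ 2 f x ![v, v] ≤ m * ‖v‖ ^ 2) ∧
    (∀ x, ‖φNR x‖ ≤ m / c * ‖x‖) ∧
    (∀ x, ⟪gradient f x, φNR x⟫ ≤ -(c ^ 2 / m) * ‖x‖ ^ 2) :=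
  stmt_5_general c m hc hm f hf hgrad0 hHess h hbnd φNR hφNR
end

section
/- Under the Newton–Raphson setup, the origin is globally exponentially stable for the continuous-time system ẋ = φ_NR(x), and there exists ε̄ > 0 such that for every ε ∈ (0, ε̄) the origin is globally exponentially stable for the discrete-time system x(k+1) = x(k) + εφ_NR(x(k)). -/
/-!
The function `f` itself is a Lyapunov function. The Hessian bounds give the quadratic sandwich
`c/2 ‖x‖² ≤ f x ≤ m/2 ‖x‖²`, the Polyak–Łojasiewicz inequality `2 c f ≤ ‖∇f‖²` and the descent
inequality `f (x + v) ≤ f x + ⟪∇f x, v⟫ + m/2 ‖v‖²`, while `c ≤ h ≤ m` gives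
`‖∇f‖² ≤ m ⟪∇f, h⁻¹ ∇f⟫` and `c ‖h⁻¹ ∇f‖ ≤ ‖∇f‖`. Hence `f` decays like `exp (-2 c t / m)` along
the flow, and each Euler step with `ε ≤ (c/m)²` multiplies it by at most `1 - ε c / m`; the
quadratic sandwich turns decay of `f` into exponential decay of `‖x‖`.
-/

open RealInnerProductSpace

theorem add_add_div_two_le_of_le_second_deriv {g g' g'' : ℝ → ℝ} {a : ℝ}
    (hg : ∀ t, HasDerivAt g (g' t) t) (hg' : ∀ t, HasDerivAt g' (g'' t) t)
    (ha : ∀ t, a ≤ g'' t) : g 0 + g' 0 + a / 2 ≤ g 1 := by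
  have hq : ∀ t, HasDerivAt (fun s => g s - a / 2 * s ^ 2) (g' t - a * t) t := fun t =>
    ((hg t).sub ((hasDerivAt_pow 2 t).const_mul (a / 2))).congr_deriv (by norm_num; ring)
  have hq' : Monotone fun t => g' t - a * t :=
    monotone_of_hasDerivAt_nonneg (fun t => (hg' t).sub ((hasDerivAt_id t).const_mul a))
      (fun t => by simpa using ha t)
  obtain ⟨ξ, hξ, hslope⟩ := exists_hasDerivAt_eq_slope _ _ zero_lt_one
    (continuous_iff_continuousAt.2 fun t => (hq t).continuousAt).continuousOn
    (fun t _ => hq t)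
  have := hq' hξ.1.le
  simp only [sub_zero, div_one] at hslope
  linarith

theorem le_add_add_div_two_of_second_deriv_le {g g' g'' : ℝ → ℝ} {b : ℝ}
    (hg : ∀ t, HasDerivAt g (g' t) t) (hg' : ∀ t, HasDerivAt g' (g'' t) t)
    (hb : ∀ t, g'' t ≤ b) : g 1 ≤ g 0 + g' 0 + b / 2 := by
  have := add_add_div_two_le_of_le_second_deriv (fun t => (hg t).neg) (fun t => (hg' t).neg)
    (a := -b) (fun t => neg_le_neg (hb t))
  simp only [Pi.neg_apply] at this
  linarith

section Taylor

variable {E : Type*} [NormedAddCommGroup E] [NormedSpace ℝ E] {f : E → ℝ}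

theorem hasDerivAt_add_smul (x v : E) (t : ℝ) : HasDerivAt (fun s : ℝ => x + s • v) v t := by
  simpa using ((hasDerivAt_id t).smul_const v).const_add x

theorem Differentiable.hasDerivAt_comp_add_smul (hf : Differentiable ℝ f) (x v : E) (t : ℝ) :
    HasDerivAt (fun s : ℝ => f (x + s • v)) (fderiv ℝ f (x + t • v) v) t :=
  (hf _).hasFDerivAt.comp_hasDerivAt t (hasDerivAt_add_smul x v t)

theorem ContDiff.hasDerivAt_fderiv_comp_add_smul (hf : ContDiff ℝ 2 f) (x v : E) (t : ℝ) :
    HasDerivAt (fun s : ℝ => fderiv ℝ f (x + s • v) v)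
      (iteratedFDeriv ℝ 2 f (x + t • v) ![v, v]) t := by
  have hdf : Differentiable ℝ (fderiv ℝ f) :=
    (hf.fderiv_right (m := 1) (by norm_num)).differentiable (by norm_num)
  have := ((hdf _).hasFDerivAt.comp_hasDerivAt t (hasDerivAt_add_smul x v t)).clm_apply
    (hasDerivAt_const t v)
  simpa [iteratedFDeriv_two_apply] using this

theorem ContDiff.add_fderiv_add_div_two_le (hf : ContDiff ℝ 2 f) {a : ℝ} (x v : E)
    (ha : ∀ y, a ≤ iteratedFDeriv ℝ 2 f y ![v, v]) :
    f x + fderiv ℝ f x v + a / 2 ≤ f (x + v) := by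
  simpa using add_add_div_two_le_of_le_second_deriv
    ((hf.differentiable (by norm_num)).hasDerivAt_comp_add_smul x v)
    (hf.hasDerivAt_fderiv_comp_add_smul x v) (fun t => ha _)

theorem ContDiff.le_add_fderiv_add_div_two (hf : ContDiff ℝ 2 f) {b : ℝ} (x v : E)
    (hb : ∀ y, iteratedFDeriv ℝ 2 f y ![v, v] ≤ b) :
    f (x + v) ≤ f x + fderiv ℝ f x v + b / 2 := by
  simpa using le_add_add_div_two_of_second_deriv_le
    ((hf.differentiable (by norm_num)).hasDerivAt_comp_add_smul x v)
    (hf.hasDerivAt_fderiv_comp_add_smul x v) (fun t => hb _)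

end Taylor

section StronglyConvex

variable {E : Type*} [NormedAddCommGroup E] [InnerProductSpace ℝ E] [CompleteSpace E]
  {f : E → ℝ} {c m : ℝ}

theorem half_mul_sq_norm_le (hf : ContDiff ℝ 2 f) (hf0 : f 0 = 0) (hgrad0 : gradient f 0 = 0)
    (hc : ∀ x v, c * ‖v‖ ^ 2 ≤ iteratedFDeriv ℝ 2 f x ![v, v]) (x : E) :
    c / 2 * ‖x‖ ^ 2 ≤ f x := by
  have := hf.add_fderiv_add_div_two_le 0 x (hc · x)
  rwa [← inner_gradient_left, hgrad0, hf0, inner_zero_left, zero_add, zero_add, zero_add,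
    mul_div_right_comm] at this

theorem le_half_mul_sq_norm (hf : ContDiff ℝ 2 f) (hf0 : f 0 = 0) (hgrad0 : gradient f 0 = 0)
    (hm : ∀ x v, iteratedFDeriv ℝ 2 f x ![v, v] ≤ m * ‖v‖ ^ 2) (x : E) :
    f x ≤ m / 2 * ‖x‖ ^ 2 := by
  have := hf.le_add_fderiv_add_div_two 0 x (hm · x)
  rwa [← inner_gradient_left, hgrad0, hf0, inner_zero_left, zero_add, zero_add, zero_add,
    mul_div_right_comm] at this

theorem le_add_inner_gradient_add (hf : ContDiff ℝ 2 f)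
    (hm : ∀ x v, iteratedFDeriv ℝ 2 f x ![v, v] ≤ m * ‖v‖ ^ 2) (x v : E) :
    f (x + v) ≤ f x + ⟪gradient f x, v⟫ + m / 2 * ‖v‖ ^ 2 := by
  rw [inner_gradient_left, div_mul_eq_mul_div]
  exact hf.le_add_fderiv_add_div_two x v (hm · v)

/-- The Polyak–Łojasiewicz inequality. -/
theorem two_mul_mul_le_sq_norm_gradient (hf : ContDiff ℝ 2 f) (hf0 : f 0 = 0) (hc0 : 0 < c)
    (hc : ∀ x v, c * ‖v‖ ^ 2 ≤ iteratedFDeriv ℝ 2 f x ![v, v]) (x : E) :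
    2 * c * f x ≤ ‖gradient f x‖ ^ 2 := by
  have h := hf.add_fderiv_add_div_two_le x (-x) (hc · (-x))
  rw [add_neg_cancel, hf0, ← inner_gradient_left, inner_neg_right, norm_neg] at h
  have hcs : ⟪gradient f x, x⟫ ≤ ‖gradient f x‖ * ‖x‖ := real_inner_le_norm _ _
  nlinarith [sq_nonneg (‖gradient f x‖ - c * ‖x‖)]

end StronglyConvex

section Loewner

variable {E : Type*} [NormedAddCommGroup E] [InnerProductSpace ℝ E] {T : E →ₗ[ℝ] E} {c m : ℝ}

theorem LinearMap.mul_sq_norm_le_inner_of_smul_one_le (hT : c • 1 ≤ T) (u : E) :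
    c * ‖u‖ ^ 2 ≤ ⟪T u, u⟫ := by
  have := hT.inner_nonneg_left u
  simpa [inner_sub_left, real_inner_smul_left, real_inner_self_eq_norm_sq] using this

theorem LinearMap.inner_le_mul_sq_norm_of_le_smul_one (hT : T ≤ m • 1) (u : E) :
    ⟪T u, u⟫ ≤ m * ‖u‖ ^ 2 := by
  have := hT.inner_nonneg_left u
  simpa [inner_sub_left, real_inner_smul_left, real_inner_self_eq_norm_sq] using this

theorem LinearMap.mul_norm_le_norm_apply_of_smul_one_le (hT : c • 1 ≤ T) (u : E) :
    c * ‖u‖ ≤ ‖T u‖ := by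
  rcases (norm_nonneg u).eq_or_lt with hu | hu
  · simp [← hu]
  have := (T.mul_sq_norm_le_inner_of_smul_one_le hT u).trans (real_inner_le_norm (T u) u)
  nlinarith

theorem LinearMap.sq_norm_apply_le_mul_inner (hm : 0 < m) (hT0 : 0 ≤ T) (hT : T ≤ m • 1)
    (u : E) : ‖T u‖ ^ 2 ≤ m * ⟪T u, u⟫ := by
  -- `T² ≤ m T` without square roots: expand `0 ≤ ⟪T (m u - T u), m u - T u⟫`.
  have hsymm := ((T.nonneg_iff_isPositive).1 hT0).isSymmetric
  have h0 := ((T.nonneg_iff_isPositive).1 hT0).inner_nonneg_left (m • u - T u)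
  have hTu := T.inner_le_mul_sq_norm_of_le_smul_one hT (T u)
  have hsw : ⟪T (T u), u⟫ = ‖T u‖ ^ 2 := by rw [hsymm, real_inner_self_eq_norm_sq]
  simp only [map_sub, map_smul, inner_sub_left, inner_sub_right, real_inner_smul_left,
    real_inner_smul_right, real_inner_self_eq_norm_sq, hsw] at h0
  have : 0 ≤ m * (m * ⟪T u, u⟫ - ‖T u‖ ^ 2) := by linarith
  linarith [(mul_nonneg_iff_of_pos_left hm).1 this]

end Loewner

section MatrixBounds

variable {ι : Type*} [DecidableEq ι] {A : Matrix ι ι ℝ} {c m : ℝ}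

theorem Matrix.PosDef.of_posSemidef_sub_smul_one (hc : 0 < c) (hA : (A - c • 1).PosSemidef) :
    A.PosDef := by
  simpa using Matrix.PosDef.posSemidef_add hA (Matrix.PosDef.one.smul hc)

variable [Fintype ι]

theorem Matrix.toEuclideanLin_le_toEuclideanLin_iff {B : Matrix ι ι ℝ} :
    A.toEuclideanLin ≤ B.toEuclideanLin ↔ (B - A).PosSemidef := by
  rw [LinearMap.le_def, ← map_sub, Matrix.isPositive_toEuclideanLin_iff]

theorem Matrix.toEuclideanLin_smul_one (c : ℝ) :
    (c • 1 : Matrix ι ι ℝ).toEuclideanLin = c • 1 := by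
  rw [map_smul, Matrix.toLpLin_one]
  rfl

theorem Matrix.toEuclideanLin_apply_toEuclideanLin_inv (hA : IsUnit A.det)
    (y : EuclideanSpace ℝ ι) : A.toEuclideanLin (A⁻¹.toEuclideanLin y) = y := by
  rw [← LinearMap.comp_apply, ← Matrix.toLpLin_mul_same, Matrix.mul_nonsing_inv _ hA,
    Matrix.toLpLin_one, LinearMap.id_apply]

theorem Matrix.mul_norm_toEuclideanLin_inv_le (hc : 0 < c) (hA : (A - c • 1).PosSemidef)
    (y : EuclideanSpace ℝ ι) : c * ‖A⁻¹.toEuclideanLin y‖ ≤ ‖y‖ := by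
  have hT : c • 1 ≤ A.toEuclideanLin := by
    rwa [← Matrix.toEuclideanLin_smul_one, Matrix.toEuclideanLin_le_toEuclideanLin_iff]
  have := LinearMap.mul_norm_le_norm_apply_of_smul_one_le hT (A⁻¹.toEuclideanLin y)
  rwa [Matrix.toEuclideanLin_apply_toEuclideanLin_inv
    ((Matrix.PosDef.of_posSemidef_sub_smul_one hc hA).isUnit.map Matrix.detMonoidHom)] at this

theorem Matrix.sq_norm_le_mul_inner_toEuclideanLin_inv (hc : 0 < c) (hm : 0 < m)
    (hcA : (A - c • 1).PosSemidef) (hAm : (m • 1 - A).PosSemidef) (y : EuclideanSpace ℝ ι) :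
    ‖y‖ ^ 2 ≤ m * ⟪y, A⁻¹.toEuclideanLin y⟫ := by
  have hPD := Matrix.PosDef.of_posSemidef_sub_smul_one hc hcA
  have hT0 : 0 ≤ A.toEuclideanLin := by
    rw [LinearMap.nonneg_iff_isPositive, Matrix.isPositive_toEuclideanLin_iff]
    exact hPD.posSemidef
  have hTm : A.toEuclideanLin ≤ m • 1 := by
    rwa [← Matrix.toEuclideanLin_smul_one, Matrix.toEuclideanLin_le_toEuclideanLin_iff]
  have := LinearMap.sq_norm_apply_le_mul_inner hm hT0 hTm (A⁻¹.toEuclideanLin y)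
  rwa [Matrix.toEuclideanLin_apply_toEuclideanLin_inv
    (hPD.isUnit.map Matrix.detMonoidHom)] at this

end MatrixBounds

section Lyapunov

variable {E : Type*} [NormedAddCommGroup E] {a b : ℝ}

theorem norm_le_sqrt_div_mul_norm_mul (ha : 0 < a) {s : ℝ} (hs : 0 ≤ s) {x y : E}
    (h : a * ‖y‖ ^ 2 ≤ s ^ 2 * (b * ‖x‖ ^ 2)) : ‖y‖ ≤ √(b / a) * ‖x‖ * s := by
  have hsq : ‖y‖ ^ 2 ≤ b / a * ‖x‖ ^ 2 * s ^ 2 := by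
    rw [div_mul_eq_mul_div, div_mul_eq_mul_div, le_div_iff₀ ha]
    linarith
  calc ‖y‖ = √(‖y‖ ^ 2) := (Real.sqrt_sq (norm_nonneg _)).symm
    _ ≤ √(b / a * ‖x‖ ^ 2 * s ^ 2) := Real.sqrt_le_sqrt hsq
    _ = √(b / a) * ‖x‖ * s := by
      rw [Real.sqrt_mul' _ (sq_nonneg _), Real.sqrt_mul' _ (sq_nonneg _),
        Real.sqrt_sq (norm_nonneg _), Real.sqrt_sq hs]

variable {V : E → ℝ}

theorem norm_le_mul_pow_of_le_mul {F : E → E} {μ : ℝ} (ha : 0 < a) (hμ : 0 ≤ μ)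
    (hVa : ∀ x, a * ‖x‖ ^ 2 ≤ V x) (hVb : ∀ x, V x ≤ b * ‖x‖ ^ 2)
    (hVF : ∀ x, V (F x) ≤ μ * V x) {x : ℕ → E} (hx : ∀ k, x (k + 1) = F (x k)) (k : ℕ) :
    ‖x k‖ ≤ √(b / a) * ‖x 0‖ * √μ ^ k := by
  refine norm_le_sqrt_div_mul_norm_mul ha (by positivity) ?_
  calc a * ‖x k‖ ^ 2 ≤ V (x k) := hVa _
    _ ≤ μ ^ k * V (x 0) := le_geom (u := fun k => V (x k)) hμ k fun j _ => by
      simpa only [hx j] using hVF (x j)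
    _ = (√μ ^ k) ^ 2 * V (x 0) := by rw [← pow_mul, mul_comm k 2, pow_mul, Real.sq_sqrt hμ]
    _ ≤ (√μ ^ k) ^ 2 * (b * ‖x 0‖ ^ 2) := by gcongr; exact hVb _

variable [NormedSpace ℝ E]

theorem norm_le_mul_exp_of_fderiv_le (ha : 0 < a) (hV : Differentiable ℝ V)
    (hVa : ∀ x, a * ‖x‖ ^ 2 ≤ V x) (hVb : ∀ x, V x ≤ b * ‖x‖ ^ 2) {φ : E → E} {lam : ℝ}
    (hVφ : ∀ x, fderiv ℝ V x (φ x) ≤ -(2 * lam) * V x) {x : ℝ → E}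
    (hx : ∀ t, 0 ≤ t → HasDerivAt x (φ (x t)) t) {t : ℝ} (ht : 0 ≤ t) :
    ‖x t‖ ≤ √(b / a) * ‖x 0‖ * Real.exp (-lam * t) := by
  have hVx : ∀ s, 0 ≤ s → HasDerivAt (fun s => V (x s)) (fderiv ℝ V (x s) (φ (x s))) s :=
    fun s hs => (hV (x s)).hasFDerivAt.comp_hasDerivAt s (hx s hs)
  have hgron := le_gronwallBound_of_liminf_deriv_right_le (f := fun s => V (x s)) (δ := V (x 0))
    (K := -(2 * lam)) (ε := 0) (a := 0) (b := t)
    (fun s hs => (hVx s hs.1).continuousAt.continuousWithinAt)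
    (fun s hs _ hr => (hVx s hs.1).hasDerivWithinAt.liminf_right_slope_le hr) le_rfl
    (fun s _ => by simpa using hVφ (x s)) t ⟨ht, le_rfl⟩
  rw [gronwallBound_ε0, sub_zero] at hgron
  refine norm_le_sqrt_div_mul_norm_mul ha (Real.exp_nonneg _) ?_
  calc a * ‖x t‖ ^ 2 ≤ V (x t) := hVa _
    _ ≤ V (x 0) * Real.exp (-(2 * lam) * t) := hgron
    _ = Real.exp (-lam * t) ^ 2 * V (x 0) := by rw [← Real.exp_nat_mul]; ring_nf
    _ ≤ Real.exp (-lam * t) ^ 2 * (b * ‖x 0‖ ^ 2) := by gcongr; exact hVb _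

end Lyapunov

section GradientLikeField

variable {E : Type*} [NormedAddCommGroup E] [InnerProductSpace ℝ E] [CompleteSpace E]
  {f : E → ℝ} {φ : E → E} {c m : ℝ}

theorem fderiv_apply_le_neg_mul_of_inner_gradient_le (hm : 0 < m)
    (hPL : ∀ x, 2 * c * f x ≤ ‖gradient f x‖ ^ 2)
    (hφ : ∀ x, m * ⟪gradient f x, φ x⟫ ≤ -‖gradient f x‖ ^ 2) (x : E) :
    fderiv ℝ f x (φ x) ≤ -(2 * (c / m)) * f x := by
  rw [← inner_gradient_left]
  refine le_of_mul_le_mul_left ?_ hm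
  calc m * ⟪gradient f x, φ x⟫ ≤ -‖gradient f x‖ ^ 2 := hφ x
    _ ≤ -(2 * c * f x) := neg_le_neg (hPL x)
    _ = m * (-(2 * (c / m)) * f x) := by field_simp

theorem apply_add_smul_le_one_sub_mul (hc : 0 < c) (hm : 0 < m) (hf : ContDiff ℝ 2 f)
    (hHess : ∀ x v, iteratedFDeriv ℝ 2 f x ![v, v] ≤ m * ‖v‖ ^ 2)
    (hPL : ∀ x, 2 * c * f x ≤ ‖gradient f x‖ ^ 2)
    (hφ : ∀ x, m * ⟪gradient f x, φ x⟫ ≤ -‖gradient f x‖ ^ 2)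
    (hφc : ∀ x, c * ‖φ x‖ ≤ ‖gradient f x‖) {ε : ℝ} (hε : 0 ≤ ε) (hεc : ε ≤ (c / m) ^ 2)
    (x : E) : f (x + ε • φ x) ≤ (1 - ε * (c / m)) * f x := by
  have hsmooth := le_add_inner_gradient_add hf hHess x (ε • φ x)
  rw [real_inner_smul_right, norm_smul, Real.norm_of_nonneg hε] at hsmooth
  have hφsq : (c * ‖φ x‖) ^ 2 ≤ ‖gradient f x‖ ^ 2 :=
    pow_le_pow_left₀ (by positivity) (hφc x) 2
  have hεm : ε * m ^ 2 ≤ c ^ 2 := by rwa [div_pow, le_div_iff₀ (by positivity)] at hεc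
  have hquad : m ^ 2 * (ε * ‖φ x‖) ^ 2 ≤ ε * ‖gradient f x‖ ^ 2 := by
    nlinarith [mul_le_mul_of_nonneg_right hεm (mul_nonneg hε (sq_nonneg ‖φ x‖))]
  refine le_of_mul_le_mul_left ?_ hm
  calc m * f (x + ε • φ x)
      ≤ m * f x + ε * (m * ⟪gradient f x, φ x⟫) + m ^ 2 * (ε * ‖φ x‖) ^ 2 / 2 := by
        linarith [mul_le_mul_of_nonneg_left hsmooth hm.le]
    _ ≤ m * f x - ε * ‖gradient f x‖ ^ 2 / 2 := by
        linarith [mul_le_mul_of_nonneg_left (hφ x) hε]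
    _ ≤ m * f x - ε * c * f x := by linarith [mul_le_mul_of_nonneg_left (hPL x) hε]
    _ = m * ((1 - ε * (c / m)) * f x) := by field_simp

end GradientLikeField

theorem stmt_7_general {n : ℕ} (c m : ℝ) (hc : 0 < c) (hc1 : c ≤ 1) (hm : 1 ≤ m)
    (f : EuclideanSpace ℝ (Fin n) → ℝ) (hf : ContDiff ℝ 3 f)
    (hf0 : f 0 = 0) (hgrad0 : gradient f 0 = 0)
    (hHess : ∀ x v : EuclideanSpace ℝ (Fin n),
      c * ‖v‖ ^ 2 ≤ iteratedFDeriv ℝ 2 f x ![v, v] ∧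
      iteratedFDeriv ℝ 2 f x ![v, v] ≤ m * ‖v‖ ^ 2)
    (h : EuclideanSpace ℝ (Fin n) → Matrix (Fin n) (Fin n) ℝ)
    (hbnd : ∀ x, (h x - c • (1 : Matrix (Fin n) (Fin n) ℝ)).PosSemidef ∧
      (m • (1 : Matrix (Fin n) (Fin n) ℝ) - h x).PosSemidef)
    (φNR : EuclideanSpace ℝ (Fin n) → EuclideanSpace ℝ (Fin n))
    (hφNR : ∀ x, φNR x = -(Matrix.toEuclideanLin (h x)⁻¹ (gradient f x))) :
    (∃ M lam : ℝ, 0 < M ∧ 0 < lam ∧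
      ∀ x : ℝ → EuclideanSpace ℝ (Fin n),
        (∀ t : ℝ, 0 ≤ t → HasDerivAt x (φNR (x t)) t) →
        ∀ t : ℝ, 0 ≤ t → ‖x t‖ ≤ M * ‖x 0‖ * Real.exp (-lam * t)) ∧
    (∃ εbar : ℝ, 0 < εbar ∧ ∀ ε : ℝ, 0 < ε → ε < εbar →
      ∃ M μ : ℝ, 0 < M ∧ 0 < μ ∧ μ < 1 ∧
        ∀ x : ℕ → EuclideanSpace ℝ (Fin n),
          (∀ k : ℕ, x (k + 1) = x k + ε • φNR (x k)) →
          ∀ k : ℕ, ‖x k‖ ≤ M * ‖x 0‖ * μ ^ k) := by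
  have hm0 : 0 < m := one_pos.trans_le hm
  have hf2 : ContDiff ℝ 2 f := hf.of_le (by norm_num)
  have hlow := half_mul_sq_norm_le hf2 hf0 hgrad0 fun x v => (hHess x v).1
  have hup := le_half_mul_sq_norm hf2 hf0 hgrad0 fun x v => (hHess x v).2
  have hPL := two_mul_mul_le_sq_norm_gradient hf2 hf0 hc fun x v => (hHess x v).1
  have hdesc : ∀ x, m * ⟪gradient f x, φNR x⟫ ≤ -‖gradient f x‖ ^ 2 := fun x => by
    rw [hφNR, inner_neg_right, mul_neg, neg_le_neg_iff]
    exact Matrix.sq_norm_le_mul_inner_toEuclideanLin_inv hc hm0 (hbnd x).1 (hbnd x).2 _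
  have hφc : ∀ x, c * ‖φNR x‖ ≤ ‖gradient f x‖ := fun x => by
    rw [hφNR, norm_neg]
    exact Matrix.mul_norm_toEuclideanLin_inv_le hc (hbnd x).1 _
  refine ⟨⟨√(m / 2 / (c / 2)), c / m, by positivity, by positivity, fun x hx t ht =>
    norm_le_mul_exp_of_fderiv_le (half_pos hc) (hf2.differentiable (by norm_num)) hlow hup
      (fderiv_apply_le_neg_mul_of_inner_gradient_le hm0 hPL hdesc) hx ht⟩,
    ⟨(c / m) ^ 2, by positivity, fun ε hε hεbar => ?_⟩⟩
  have hcm : c / m ≤ 1 := (div_le_one hm0).2 (hc1.trans hm)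
  have hrate : ε * (c / m) < 1 := by
    nlinarith [pow_le_one₀ (div_pos hc hm0).le hcm (n := 2), div_pos hc hm0]
  refine ⟨√(m / 2 / (c / 2)), √(1 - ε * (c / m)), by positivity, Real.sqrt_pos.2 (by linarith),
    (Real.sqrt_lt' one_pos).2 (by linarith [mul_pos hε (div_pos hc hm0)]), fun x hx k =>
    norm_le_mul_pow_of_le_mul (half_pos hc) (by linarith) hlow hup
      (apply_add_smul_le_one_sub_mul hc hm0 hf2 (fun x v => (hHess x v).2) hPL hdesc hφc hε.le
        hεbar.le) hx k⟩

/-- In the Newton–Raphson setup, the origin is globally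
exponentially stable for `ẋ = φ_NR(x)`, and there is `ε̄ > 0` such that the
forward-Euler discretization is globally exponentially stable for every
`ε ∈ (0, ε̄)`. -/
theorem stmt_7 {n : ℕ} (c m : ℝ) (hc : 0 < c) (hc1 : c ≤ 1) (hm : 1 ≤ m)
    (f : EuclideanSpace ℝ (Fin n) → ℝ) (hf : ContDiff ℝ 3 f)
    (hf0 : f 0 = 0) (hgrad0 : gradient f 0 = 0)
    (hHess : ∀ x v : EuclideanSpace ℝ (Fin n),
      c * ‖v‖ ^ 2 ≤ iteratedFDeriv ℝ 2 f x ![v, v] ∧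
      iteratedFDeriv ℝ 2 f x ![v, v] ≤ m * ‖v‖ ^ 2)
    (h : EuclideanSpace ℝ (Fin n) → Matrix (Fin n) (Fin n) ℝ)
    (hsym : ∀ x, (h x).IsHermitian)
    (hbnd : ∀ x, (h x - c • (1 : Matrix (Fin n) (Fin n) ℝ)).PosSemidef ∧
      (m • (1 : Matrix (Fin n) (Fin n) ℝ) - h x).PosSemidef)
    (φNR : EuclideanSpace ℝ (Fin n) → EuclideanSpace ℝ (Fin n))
    (hφNR : ∀ x, φNR x = -(Matrix.toEuclideanLin (h x)⁻¹ (gradient f x))) :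
    (∃ M lam : ℝ, 0 < M ∧ 0 < lam ∧
      ∀ x : ℝ → EuclideanSpace ℝ (Fin n),
        (∀ t : ℝ, 0 ≤ t → HasDerivAt x (φNR (x t)) t) →
        ∀ t : ℝ, 0 ≤ t → ‖x t‖ ≤ M * ‖x 0‖ * Real.exp (-lam * t)) ∧
    (∃ εbar : ℝ, 0 < εbar ∧ ∀ ε : ℝ, 0 < ε → ε < εbar →
      ∃ M μ : ℝ, 0 < M ∧ 0 < μ ∧ μ < 1 ∧
        ∀ x : ℕ → EuclideanSpace ℝ (Fin n),
          (∀ k : ℕ, x (k + 1) = x k + ε • φNR (x k)) →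
          ∀ k : ℕ, ‖x k‖ ≤ M * ‖x 0‖ * μ ^ k) :=
  stmt_7_general c m hc hc1 hm f hf hf0 hgrad0 hHess h hbnd φNR hφNR
end

section
/- In the perturbed multi-agent setup, under Assumptions 1 and 2 there exists a positive constant a_Δ such that ‖φ_x(x, χ) − φ_PNR(x)‖ ≤ a_Δ‖χ‖ for all x ∈ ℝ^{nN} and all perturbations χ = (χ^y, χ^z). -/
open RealInnerProductSpace

noncomputable section

/-- Frobenius norm of a real square matrix. -/
def frobNorm {n : ℕ} (A : Matrix (Fin n) (Fin n) ℝ) : ℝ :=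
  Real.sqrt (∑ i, ∑ j, (A i j) ^ 2)

/-- `g_i(x) := h_i(x) x − ∇f_i(x)`. -/
def gmap {n : ℕ} (f : EuclideanSpace ℝ (Fin n) → ℝ)
    (h : EuclideanSpace ℝ (Fin n) → Matrix (Fin n) (Fin n) ℝ)
    (x : EuclideanSpace ℝ (Fin n)) : EuclideanSpace ℝ (Fin n) :=
  Matrix.toEuclideanLin (h x) x - gradient f x

/-- `h̄(x) := (1/N) Σᵢ h_i(xᵢ)`. -/
def hbar {n N : ℕ} (h : Fin N → EuclideanSpace ℝ (Fin n) → Matrix (Fin n) (Fin n) ℝ)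
    (xs : Fin N → EuclideanSpace ℝ (Fin n)) : Matrix (Fin n) (Fin n) ℝ :=
  (N : ℝ)⁻¹ • ∑ i, h i (xs i)

/-- `ḡ(x) := (1/N) Σᵢ g_i(xᵢ)`. -/
def gbar {n N : ℕ} (f : Fin N → EuclideanSpace ℝ (Fin n) → ℝ)
    (h : Fin N → EuclideanSpace ℝ (Fin n) → Matrix (Fin n) (Fin n) ℝ)
    (xs : Fin N → EuclideanSpace ℝ (Fin n)) : EuclideanSpace ℝ (Fin n) :=
  (N : ℝ)⁻¹ • ∑ i, gmap (f i) (h i) (xs i)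

/-- `ψ(x) := h̄(x)⁻¹ ḡ(x)`. -/
def psi {n N : ℕ} (f : Fin N → EuclideanSpace ℝ (Fin n) → ℝ)
    (h : Fin N → EuclideanSpace ℝ (Fin n) → Matrix (Fin n) (Fin n) ℝ)
    (xs : Fin N → EuclideanSpace ℝ (Fin n)) : EuclideanSpace ℝ (Fin n) :=
  Matrix.toEuclideanLin (hbar h xs)⁻¹ (gbar f h xs)

open Classical in
/-- The thresholding operator `[z]_c`: the identity if `z ≥ (c/2)I` in the
positive-semidefinite order, and `(c/2)I` otherwise. -/
def thresh {n : ℕ} (c : ℝ) (z : Matrix (Fin n) (Fin n) ℝ) : Matrix (Fin n) (Fin n) ℝ :=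
  if (z - (c / 2) • (1 : Matrix (Fin n) (Fin n) ℝ)).PosSemidef then z
  else (c / 2) • (1 : Matrix (Fin n) (Fin n) ℝ)

/-- The perturbed multi-agent vector field `φ_x(x, χ)`, whose `i`-th block is
`−xᵢ − x* + ([χ^zᵢ + h̄(x)]_c)⁻¹ (χ^yᵢ + ḡ(x) + h̄(x) x*)`. -/
def phix {n N : ℕ} (c : ℝ) (xstar : EuclideanSpace ℝ (Fin n))
    (f : Fin N → EuclideanSpace ℝ (Fin n) → ℝ)
    (h : Fin N → EuclideanSpace ℝ (Fin n) → Matrix (Fin n) (Fin n) ℝ)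
    (xs χy : Fin N → EuclideanSpace ℝ (Fin n))
    (χz : Fin N → Matrix (Fin n) (Fin n) ℝ) : Fin N → EuclideanSpace ℝ (Fin n) :=
  fun i => -xs i - xstar +
    Matrix.toEuclideanLin (thresh c (χz i + hbar h xs))⁻¹
      (χy i + gbar f h xs + Matrix.toEuclideanLin (hbar h xs) xstar)

/-- Euclidean norm of a stacked vector in `ℝ^{nN}`. -/
def stNorm {n N : ℕ} (xs : Fin N → EuclideanSpace ℝ (Fin n)) : ℝ :=
  Real.sqrt (∑ i, ‖xs i‖ ^ 2)

/-- Norm of a perturbation `χ = (χ^y, χ^z)`: `‖χ‖² = ‖χ^y‖² + ‖χ^z‖²`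
(Frobenius norms on the matrix blocks). -/
def chiNorm {n N : ℕ} (χy : Fin N → EuclideanSpace ℝ (Fin n))
    (χz : Fin N → Matrix (Fin n) (Fin n) ℝ) : ℝ :=
  Real.sqrt ((∑ i, ‖χy i‖ ^ 2) + ∑ i, frobNorm (χz i) ^ 2)

/-! Blockwise, with `M = h̄(x)`, `B = [χ^zᵢ + M]_c` and `w = ḡ(x) + M x*`, the difference of the
two vector fields is `B⁻¹ χ^yᵢ + B⁻¹ (M - B) M⁻¹ w`. Since `B ≥ (c/2) I` and `M ≥ c I`, the two
inverses have operator norm at most `2/c` and `1/c`, and `‖w‖ ≤ m_g + m ‖x*‖`. Thresholding keeps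
`‖M - B‖` linear in `‖χ^zᵢ‖`: either `M - B = -χ^zᵢ`, or the threshold is active, which forces
`‖χ^zᵢ‖ > c/2` while `‖M - B‖ = ‖M - (c/2) I‖ ≤ m`. Summing the squares of the block bounds costs
a factor `√2`. -/

section Frobenius

attribute [local instance] Matrix.frobeniusNormedAddCommGroup

theorem frobNorm_eq_norm {n : ℕ} (A : Matrix (Fin n) (Fin n) ℝ) : frobNorm A = ‖A‖ := by
  simp [frobNorm, Matrix.frobenius_norm_def, Real.sqrt_eq_rpow]

theorem norm_toEuclideanLin_le_frobNorm {n : ℕ} (A : Matrix (Fin n) (Fin n) ℝ)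
    (v : EuclideanSpace ℝ (Fin n)) : ‖Matrix.toEuclideanLin A v‖ ≤ frobNorm A * ‖v‖ := by
  have := Matrix.frobenius_norm_mul A (Matrix.replicateCol Unit v.ofLp)
  rw [← Matrix.replicateCol_mulVec, Matrix.frobenius_norm_replicateCol,
    Matrix.frobenius_norm_replicateCol] at this
  simpa [frobNorm_eq_norm, Matrix.toLpLin_apply] using this

end Frobenius

section L2

open Matrix
open scoped Matrix.Norms.L2Operator MatrixOrder

theorem Matrix.smul_one_nonneg {ι : Type*} [DecidableEq ι] {r : ℝ} (hr : 0 ≤ r) :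
    0 ≤ r • (1 : Matrix ι ι ℝ) :=
  nonneg_iff_posSemidef.2 (PosSemidef.one.smul hr)

variable {ι : Type*} [Fintype ι] [DecidableEq ι]

theorem Matrix.norm_toEuclideanLin_le (A : Matrix ι ι ℝ) (v : EuclideanSpace ℝ ι) :
    ‖toEuclideanLin A v‖ ≤ ‖A‖ * ‖v‖ :=
  A.l2_opNorm_mulVec v

theorem l2_opNorm_le_frobNorm {n : ℕ} (A : Matrix (Fin n) (Fin n) ℝ) : ‖A‖ ≤ frobNorm A :=
  ContinuousLinearMap.opNorm_le_bound _ (Real.sqrt_nonneg _)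
    (norm_toEuclideanLin_le_frobNorm A)

theorem Matrix.toEuclideanLin_mul_apply (A B : Matrix ι ι ℝ) (v : EuclideanSpace ℝ ι) :
    toEuclideanLin (A * B) v = toEuclideanLin A (toEuclideanLin B v) := by
  rw [toLpLin_mul_same, LinearMap.comp_apply]

theorem Matrix.toEuclideanLin_inv_apply_apply {M : Matrix ι ι ℝ} (hM : IsUnit M.det)
    (v : EuclideanSpace ℝ ι) : toEuclideanLin M⁻¹ (toEuclideanLin M v) = v := by
  rw [← toEuclideanLin_mul_apply, nonsing_inv_mul _ hM, toLpLin_one, LinearMap.id_apply]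

theorem Matrix.toEuclideanLin_apply_inv_apply_s11 {M : Matrix ι ι ℝ} (hM : IsUnit M.det)
    (v : EuclideanSpace ℝ ι) : toEuclideanLin M (toEuclideanLin M⁻¹ v) = v := by
  rw [← toEuclideanLin_mul_apply, mul_nonsing_inv _ hM, toLpLin_one, LinearMap.id_apply]

theorem Matrix.inner_toEuclideanLin_le_of_le {A B : Matrix ι ι ℝ} (h : A ≤ B)
    (v : EuclideanSpace ℝ ι) : ⟪v, toEuclideanLin A v⟫ ≤ ⟪v, toEuclideanLin B v⟫ := by
  have := (isPositive_toEuclideanLin_iff.2 h).2 v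
  rw [map_sub, LinearMap.sub_apply, inner_sub_left, RCLike.re_to_real,
    real_inner_comm, real_inner_comm v] at this
  linarith

theorem Matrix.inner_toEuclideanLin_smul_one (r : ℝ) (v : EuclideanSpace ℝ ι) :
    ⟪v, toEuclideanLin (r • (1 : Matrix ι ι ℝ)) v⟫ = r * ‖v‖ ^ 2 := by
  simp [real_inner_smul_right]

theorem Matrix.norm_le_of_abs_inner_le {A : Matrix ι ι ℝ} (hA : A.IsHermitian) {r : ℝ}
    (hr : 0 ≤ r) (h : ∀ v, |⟪v, toEuclideanLin A v⟫| ≤ r * ‖v‖ ^ 2) : ‖A‖ ≤ r := by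
  have hsymm : (toEuclideanCLM (𝕜 := ℝ) A).IsSymmetric := by
    rw [coe_toEuclideanCLM_eq_toEuclideanLin]
    exact isSymmetric_toEuclideanLin_iff.2 hA
  rw [cstar_norm_def, ContinuousLinearMap.norm_eq_iSup_rayleighQuotient _ hsymm]
  refine ciSup_le fun v => ?_
  rcases eq_or_ne v 0 with rfl | hv
  · simpa using hr
  rw [ContinuousLinearMap.rayleighQuotient, ContinuousLinearMap.reApplyInnerSelf_apply,
    RCLike.re_to_real, real_inner_comm, abs_div, abs_sq, div_le_iff₀ (by positivity)]
  exact h v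

theorem Matrix.norm_le_of_nonneg_of_le_smul_one {A : Matrix ι ι ℝ} {r : ℝ} (hr : 0 ≤ r)
    (h₀ : 0 ≤ A) (h : A ≤ r • 1) : ‖A‖ ≤ r := by
  refine norm_le_of_abs_inner_le (nonneg_iff_posSemidef.1 h₀).isHermitian hr fun v => ?_
  have hlo := inner_toEuclideanLin_le_of_le h₀ v
  have hhi := inner_toEuclideanLin_le_of_le h v
  rw [map_zero, LinearMap.zero_apply, inner_zero_right] at hlo
  rw [inner_toEuclideanLin_smul_one] at hhi
  exact abs_le.2 ⟨by nlinarith [sq_nonneg ‖v‖], hhi⟩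

theorem Matrix.isUnit_det_of_smul_one_le {M : Matrix ι ι ℝ} {α : ℝ} (hα : 0 < α)
    (hM : α • 1 ≤ M) : IsUnit M.det := by
  have hpd : M.PosDef := by
    simpa using (PosDef.one.smul hα).add_posSemidef (le_iff.1 hM)
  exact (isUnit_iff_isUnit_det M).1 hpd.isUnit

theorem Matrix.norm_inv_le_of_smul_one_le {M : Matrix ι ι ℝ} {α : ℝ} (hα : 0 < α)
    (hM : α • 1 ≤ M) : ‖M⁻¹‖ ≤ α⁻¹ := by
  refine ContinuousLinearMap.opNorm_le_bound _ (inv_nonneg.2 hα.le) fun w => ?_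
  set y := toEuclideanLin M⁻¹ w
  have hquad : α * ‖y‖ ^ 2 ≤ ‖y‖ * ‖w‖ := by
    have := inner_toEuclideanLin_le_of_le hM y
    rw [inner_toEuclideanLin_smul_one,
      toEuclideanLin_apply_inv_apply_s11 (isUnit_det_of_smul_one_le hα hM)] at this
    exact this.trans (real_inner_le_norm y w)
  show ‖y‖ ≤ α⁻¹ * ‖w‖
  rw [le_inv_mul_iff₀ hα]
  rcases (norm_nonneg y).eq_or_lt with hy | hy
  · rw [← hy]; simp
  · nlinarith

theorem Matrix.smul_one_le_add_of_norm_le {M Z : Matrix ι ι ℝ} (hZ : Z.IsHermitian) {c : ℝ}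
    (hM : c • 1 ≤ M) (hZc : ‖Z‖ ≤ c / 2) : (c / 2) • 1 ≤ Z + M := by
  have hMherm : M.IsHermitian := by
    simpa using (le_iff.1 hM).isHermitian.add (isHermitian_one.smul (.all c))
  rw [le_iff, ← isPositive_toEuclideanLin_iff]
  refine ⟨isSymmetric_toEuclideanLin_iff.2 ((hZ.add hMherm).sub (isHermitian_one.smul (.all _))),
    fun v => ?_⟩
  have hMv := inner_toEuclideanLin_le_of_le hM v
  have hZv : -(‖Z‖ * ‖v‖ ^ 2) ≤ ⟪v, toEuclideanLin Z v⟫ := by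
    refine neg_le_of_abs_le ((abs_real_inner_le_norm _ _).trans ?_)
    nlinarith [norm_toEuclideanLin_le Z v, norm_nonneg v]
  rw [inner_toEuclideanLin_smul_one] at hMv
  rw [RCLike.re_to_real, real_inner_comm, map_sub, map_add, LinearMap.sub_apply,
    LinearMap.add_apply, inner_sub_right, inner_add_right, inner_toEuclideanLin_smul_one]
  nlinarith [sq_nonneg ‖v‖]

theorem smul_one_le_thresh {n : ℕ} (c : ℝ) (z : Matrix (Fin n) (Fin n) ℝ) :
    (c / 2) • 1 ≤ thresh c z := by
  unfold thresh
  split_ifs with h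
  · exact h
  · exact le_rfl

theorem norm_sub_thresh_add_le {n : ℕ} {c m : ℝ} (hc : 0 < c) (hm : 0 ≤ m)
    {M Z : Matrix (Fin n) (Fin n) ℝ} (hZ : Z.IsHermitian) (hM₁ : c • 1 ≤ M) (hM₂ : M ≤ m • 1) :
    ‖M - thresh c (Z + M)‖ ≤ (1 + 2 * m / c) * ‖Z‖ := by
  unfold thresh
  split_ifs with h
  · rw [sub_add_cancel_right, norm_neg]
    nlinarith [norm_nonneg Z, div_nonneg (mul_nonneg zero_le_two hm) hc.le]
  · have hZc : c / 2 < ‖Z‖ := lt_of_not_ge fun hZc => h (smul_one_le_add_of_norm_le hZ hM₁ hZc)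
    have hhalf : (c / 2) • (1 : Matrix (Fin n) (Fin n) ℝ) ≤ c • 1 := by
      rw [← sub_nonneg, ← sub_smul]
      exact smul_one_nonneg (by linarith)
    calc ‖M - (c / 2) • 1‖ ≤ m :=
          norm_le_of_nonneg_of_le_smul_one hm (sub_nonneg.2 (hhalf.trans hM₁))
            ((sub_le_self _ (smul_one_nonneg (by linarith))).trans hM₂)
      _ = 2 * m / c * (c / 2) := by field_simp
      _ ≤ (1 + 2 * m / c) * ‖Z‖ := by
        nlinarith [div_nonneg (mul_nonneg zero_le_two hm) hc.le]

theorem norm_perturbedBlock_sub_le {n : ℕ} {c m m_g : ℝ} (hc : 0 < c) (hm : 0 ≤ m)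
    {M Z : Matrix (Fin n) (Fin n) ℝ} (hZ : Z.IsHermitian) (hM₁ : c • 1 ≤ M) (hM₂ : M ≤ m • 1)
    {g : EuclideanSpace ℝ (Fin n)} (hg : ‖g‖ ≤ m_g) (x xstar y : EuclideanSpace ℝ (Fin n)) :
    ‖(-x - xstar + toEuclideanLin (thresh c (Z + M))⁻¹ (y + g + toEuclideanLin M xstar))
        - (-x + toEuclideanLin M⁻¹ g)‖
      ≤ 2 / c * (1 + (1 + 2 * m / c) * ((m_g + m * ‖xstar‖) / c)) * (‖y‖ + frobNorm Z) := by
  set B := thresh c (Z + M)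
  set w := g + toEuclideanLin M xstar
  have hc2 : 0 < c / 2 := by linarith
  have hB : (c / 2) • 1 ≤ B := smul_one_le_thresh c _
  have hMdet := isUnit_det_of_smul_one_le hc hM₁
  have hBdet := isUnit_det_of_smul_one_le hc2 hB
  have hMw : toEuclideanLin M⁻¹ w = toEuclideanLin M⁻¹ g + xstar := by
    rw [map_add, toEuclideanLin_inv_apply_apply hMdet]
  have hsplit : (-x - xstar + toEuclideanLin B⁻¹ (y + w)) - (-x + toEuclideanLin M⁻¹ g)
      = toEuclideanLin B⁻¹ y + toEuclideanLin (B⁻¹ * (M - B) * M⁻¹) w := by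
    rw [← inv_sub_inv (iff_of_true ((isUnit_iff_isUnit_det B).2 hBdet)
      ((isUnit_iff_isUnit_det M).2 hMdet)), map_sub, LinearMap.sub_apply, hMw, map_add]
    abel
  have hw : ‖w‖ ≤ m_g + m * ‖xstar‖ := by
    have hMnorm : ‖M‖ ≤ m :=
      norm_le_of_nonneg_of_le_smul_one hm ((smul_one_nonneg hc.le).trans hM₁) hM₂
    calc ‖w‖ ≤ ‖g‖ + ‖M‖ * ‖xstar‖ :=
          (norm_add_le _ _).trans (by gcongr; exact norm_toEuclideanLin_le _ _)
      _ ≤ m_g + m * ‖xstar‖ := by gcongr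
  have hBinv : ‖B⁻¹‖ ≤ 2 / c := by simpa using norm_inv_le_of_smul_one_le hc2 hB
  have hMinv : ‖M⁻¹‖ ≤ c⁻¹ := norm_inv_le_of_smul_one_le hc hM₁
  have hMB : ‖M - B‖ ≤ (1 + 2 * m / c) * frobNorm Z :=
    (norm_sub_thresh_add_le hc hm hZ hM₁ hM₂).trans (by gcongr; exact l2_opNorm_le_frobNorm Z)
  have hF : 0 ≤ frobNorm Z := Real.sqrt_nonneg _
  have hK : 0 ≤ 1 + 2 * m / c := by positivity
  have hQ : 0 ≤ (m_g + m * ‖xstar‖) / c := by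
    have := (norm_nonneg g).trans hg
    positivity
  rw [add_assoc y, hsplit]
  calc _ ≤ ‖B⁻¹‖ * ‖y‖ + ‖B⁻¹ * (M - B) * M⁻¹‖ * ‖w‖ :=
        (norm_add_le _ _).trans
          (add_le_add (norm_toEuclideanLin_le _ _) (norm_toEuclideanLin_le _ _))
    _ ≤ ‖B⁻¹‖ * ‖y‖ + ‖B⁻¹‖ * ‖M - B‖ * ‖M⁻¹‖ * ‖w‖ := by
        gcongr
        exact (norm_mul_le _ _).trans (by gcongr; exact norm_mul_le _ _)
    _ ≤ 2 / c * ‖y‖ + 2 / c * ((1 + 2 * m / c) * frobNorm Z) * c⁻¹ * (m_g + m * ‖xstar‖) := by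
        gcongr
    _ = 2 / c * ‖y‖ + 2 / c * ((1 + 2 * m / c) * ((m_g + m * ‖xstar‖) / c) * frobNorm Z) := by
        ring
    _ ≤ _ := by
        have := mul_nonneg (mul_nonneg hK hQ) (norm_nonneg y)
        nlinarith [mul_nonneg (div_nonneg zero_le_two hc.le) (add_nonneg hF this)]

end L2

theorem sqrt_sum_sq_le_of_le_mul_add {ι : Type*} [Fintype ι] {d a b : ι → ℝ} {K : ℝ}
    (hK : 0 ≤ K) (hd₀ : ∀ i, 0 ≤ d i) (hd : ∀ i, d i ≤ K * (a i + b i)) :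
    √(∑ i, d i ^ 2) ≤ √2 * K * √((∑ i, a i ^ 2) + ∑ i, b i ^ 2) := by
  have hsum : ∑ i, d i ^ 2 ≤ 2 * K ^ 2 * ((∑ i, a i ^ 2) + ∑ i, b i ^ 2) := by
    rw [← Finset.sum_add_distrib, Finset.mul_sum]
    refine Finset.sum_le_sum fun i _ => ?_
    have := pow_le_pow_left₀ (hd₀ i) (hd i) 2
    nlinarith [sq_nonneg (a i - b i), sq_nonneg K]
  calc √(∑ i, d i ^ 2) ≤ √(2 * K ^ 2 * ((∑ i, a i ^ 2) + ∑ i, b i ^ 2)) := Real.sqrt_le_sqrt hsum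
    _ = √2 * K * √((∑ i, a i ^ 2) + ∑ i, b i ^ 2) := by
        rw [Real.sqrt_mul (by positivity), Real.sqrt_mul zero_le_two, Real.sqrt_sq hK]

theorem stmt_11_general
    {n N : ℕ} (c m : ℝ) (hc : 0 < c) (hm : 1 ≤ m)
    -- original costs, their minimizer `x*`, and the translated costs `f`
    (xstar : EuclideanSpace ℝ (Fin n))
    (f : Fin N → EuclideanSpace ℝ (Fin n) → ℝ)
    (h : Fin N → EuclideanSpace ℝ (Fin n) → Matrix (Fin n) (Fin n) ℝ)
    -- Assumption 2 (for the translated costs)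
    (m_g : ℝ)
    (hbarbnd : ∀ xs : Fin N → EuclideanSpace ℝ (Fin n),
      (hbar h xs - c • (1 : Matrix (Fin n) (Fin n) ℝ)).PosSemidef ∧
      (m • (1 : Matrix (Fin n) (Fin n) ℝ) - hbar h xs).PosSemidef)
    (hgbnd : ∀ xs : Fin N → EuclideanSpace ℝ (Fin n), ‖gbar f h xs‖ ≤ m_g)
    :
    ∃ a_Δ : ℝ, 0 < a_Δ ∧
      ∀ (xs χy : Fin N → EuclideanSpace ℝ (Fin n))
        (χz : Fin N → Matrix (Fin n) (Fin n) ℝ), (∀ i, (χz i).IsHermitian) →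
        stNorm (fun i => phix c xstar f h xs χy χz i - (-xs i + psi f h xs)) ≤
          a_Δ * chiNorm χy χz := by
  have hm₀ : 0 ≤ m := zero_le_one.trans hm
  have hm_g : 0 ≤ m_g := (norm_nonneg _).trans (hgbnd 0)
  have hK : 0 < 2 / c * (1 + (1 + 2 * m / c) * ((m_g + m * ‖xstar‖) / c)) := by positivity
  refine ⟨√2 * _, mul_pos (by positivity) hK, fun xs χy χz hχz => ?_⟩
  obtain ⟨hM₁, hM₂⟩ := hbarbnd xs
  exact sqrt_sum_sq_le_of_le_mul_add hK.le (fun i => norm_nonneg _) fun i =>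
    norm_perturbedBlock_sub_le hc hm₀ (hχz i) hM₁ hM₂ (hgbnd xs) (xs i) xstar (χy i)

/-- (Lemma 1, eq. (phi_p_x_2)) There is `a_Δ > 0` with
`‖φ_x(x, χ) − φ_PNR(x)‖ ≤ a_Δ ‖χ‖` for all states and perturbations. -/
theorem stmt_11
    {n N : ℕ} (hN : 0 < N) (c m : ℝ) (hc : 0 < c) (hc1 : c ≤ 1) (hm : 1 ≤ m)
    -- original costs, their minimizer `x*`, and the translated costs `f`
    (forig : Fin N → EuclideanSpace ℝ (Fin n) → ℝ) (hforig : ∀ i, ContDiff ℝ 3 (forig i))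
    (xstar : EuclideanSpace ℝ (Fin n))
    (hminstar : ∀ y, (N : ℝ)⁻¹ * ∑ i, forig i xstar ≤ (N : ℝ)⁻¹ * ∑ i, forig i y)
    (f : Fin N → EuclideanSpace ℝ (Fin n) → ℝ)
    (hft : ∀ i y, f i y = forig i (y + xstar))
    -- Assumption 1: `cI ≤ ∇²f̄ ≤ mI` for the average of the original costs
    (hHess : ∀ x v : EuclideanSpace ℝ (Fin n),
      c * ‖v‖ ^ 2 ≤ iteratedFDeriv ℝ 2 (fun y => (N : ℝ)⁻¹ * ∑ i, forig i y) x ![v, v] ∧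
      iteratedFDeriv ℝ 2 (fun y => (N : ℝ)⁻¹ * ∑ i, forig i y) x ![v, v] ≤ m * ‖v‖ ^ 2)
    (h : Fin N → EuclideanSpace ℝ (Fin n) → Matrix (Fin n) (Fin n) ℝ)
    (hsym : ∀ i x, (h i x).IsHermitian)
    -- Assumption 2 (for the translated costs)
    (m_g a_g a_h a_ψ : ℝ) (hm_g : 0 < m_g) (ha_g : 0 < a_g) (ha_h : 0 < a_h) (ha_ψ : 0 < a_ψ)
    (hbarbnd : ∀ xs : Fin N → EuclideanSpace ℝ (Fin n),
      (hbar h xs - c • (1 : Matrix (Fin n) (Fin n) ℝ)).PosSemidef ∧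
      (m • (1 : Matrix (Fin n) (Fin n) ℝ) - hbar h xs).PosSemidef)
    (hgbnd : ∀ xs : Fin N → EuclideanSpace ℝ (Fin n), ‖gbar f h xs‖ ≤ m_g)
    (hglip : ∀ i x x', ‖gmap (f i) (h i) x - gmap (f i) (h i) x'‖ ≤ a_g * ‖x - x'‖)
    (hhlip : ∀ i x x', frobNorm (h i x - h i x') ≤ a_h * ‖x - x'‖)
    (hψlip : ∀ xs xs' : Fin N → EuclideanSpace ℝ (Fin n),
      ‖psi f h xs - psi f h xs'‖ ≤ a_ψ * stNorm (fun i => xs i - xs' i))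
    :
    ∃ a_Δ : ℝ, 0 < a_Δ ∧
      ∀ (xs χy : Fin N → EuclideanSpace ℝ (Fin n))
        (χz : Fin N → Matrix (Fin n) (Fin n) ℝ), (∀ i, (χz i).IsHermitian) →
        stNorm (fun i => phix c xstar f h xs χy χz i - (-xs i + psi f h xs)) ≤
          a_Δ * chiNorm χy χz :=
  stmt_11_general c m hc hm xstar f h m_g hbarbnd hgbnd
end
end
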